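/- arXiv:1906.06155 — 6 statements merged into one kernel-verified Lean document; each statement's English description precedes it below -/
import Mathlib

section
/- Let a < x₀ < x₁ < ... < x_{2n-1} < b, let q be a complex polynomial of degree at most n-1, and let y₀ < y₁ < y₂ ∈ (a,b) be points distinct from all xᵢ. Then N(q)(z)/∏_{i=0}^{2n-1}(z - xᵢ) equals ((y₂-y₁)/(y₂-y₀))·N((z-y₀)q)(z)/((z-y₀)(z-y₁)∏ᵢ(z-xᵢ)) + ((y₁-y₀)/(y₂-y₀))·N((z-y₂)q)(z)/((z-y₁)(z-y₂)∏ᵢ(z-xᵢ)) as rational functions, where both coefficients are nonnegative. -/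
open Polynomial Finset

/-- `N(q) = q ⬝ q*`, where `q*` has conjugated coefficients. -/
noncomputable def Nq (q : Polynomial ℂ) : Polynomial ℂ := q * q.map (starRingEnd ℂ)

/-! For real `y`, `N((X - y) q) = (X - y)² N(q)`, so the two summands on the right reduce to
`c₀ (z - y₀) E` and `c₂ (z - y₂) E` with `E = N(q)(z) / ((z - y₁) ∏ (z - xᵢ))`; the weights
`c₀, c₂` are the barycentric coordinates of `y₁` in `[y₀, y₂]`, so
`c₀ (z - y₀) + c₂ (z - y₂) = z - y₁`, which cancels the extra factor `z - y₁`. -/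

theorem Nq_mul (p q : ℂ[X]) : Nq (p * q) = Nq p * Nq q := by
  simp only [Nq, Polynomial.map_mul]
  ring

theorem Nq_X_sub_C_ofReal (y : ℝ) : Nq (X - C (y : ℂ)) = (X - C (y : ℂ)) ^ 2 := by
  simp [Nq, sq]

theorem eval_Nq_X_sub_C_ofReal_mul (y : ℝ) (q : ℂ[X]) (z : ℂ) :
    (Nq ((X - C (y : ℂ)) * q)).eval z = (z - y) ^ 2 * (Nq q).eval z := by
  rw [Nq_mul, Nq_X_sub_C_ofReal, eval_mul, eval_pow, eval_sub, eval_X, eval_C]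

section Field

variable {K : Type*} [Field K]

theorem barycentric_combination_sub {y₀ y₂ : K} (h : y₀ ≠ y₂) (y₁ z : K) :
    (y₂ - y₁) / (y₂ - y₀) * (z - y₀) + (y₁ - y₀) / (y₂ - y₀) * (z - y₂) = z - y₁ := by
  have : y₂ - y₀ ≠ 0 := sub_ne_zero.2 h.symm
  field_simp
  ring

theorem sq_mul_div_mul_left (u E Q : K) : u ^ 2 * E / (u * Q) = u * (E / Q) := by
  rcases eq_or_ne u 0 with rfl | hu
  · simp
  · rw [sq, mul_assoc, mul_div_mul_left _ _ hu, mul_div_assoc]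

theorem div_eq_add_of_mul_add_mul_eq {c₀ c₂ u₀ u₁ u₂ : K} (hc : c₀ * u₀ + c₂ * u₂ = u₁)
    (hu₁ : u₁ ≠ 0) (E P : K) :
    E / P = c₀ * (u₀ ^ 2 * E / (u₀ * u₁ * P)) + c₂ * (u₂ ^ 2 * E / (u₁ * u₂ * P)) := by
  rw [mul_assoc u₀, mul_comm u₁ u₂, mul_assoc u₂, sq_mul_div_mul_left, sq_mul_div_mul_left,
    ← mul_assoc, ← mul_assoc, ← add_mul, hc, ← mul_div_assoc, mul_div_mul_left _ _ hu₁]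

end Field

theorem cone_decomposition_general {n : ℕ} (x : Fin (2 * n) → ℝ) (q : Polynomial ℂ) (y₀ y₁ y₂ : ℝ)
    (hy01 : y₀ < y₁) (hy12 : y₁ < y₂) :
    0 ≤ (y₂ - y₁) / (y₂ - y₀) ∧ 0 ≤ (y₁ - y₀) / (y₂ - y₀) ∧
    ∀ z : ℂ, z ≠ (y₀ : ℂ) → z ≠ (y₁ : ℂ) → z ≠ (y₂ : ℂ) → (∀ i, z ≠ (x i : ℂ)) →
      (Nq q).eval z / ∏ i, (z - (x i : ℂ)) =
        (((y₂ - y₁) / (y₂ - y₀) : ℝ) : ℂ) *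
          ((Nq ((X - Polynomial.C (y₀ : ℂ)) * q)).eval z /
            ((z - (y₀ : ℂ)) * (z - (y₁ : ℂ)) * ∏ i, (z - (x i : ℂ)))) +
        (((y₁ - y₀) / (y₂ - y₀) : ℝ) : ℂ) *
          ((Nq ((X - Polynomial.C (y₂ : ℂ)) * q)).eval z /
            ((z - (y₁ : ℂ)) * (z - (y₂ : ℂ)) * ∏ i, (z - (x i : ℂ)))) := by
  have h02 : y₀ < y₂ := hy01.trans hy12
  refine ⟨div_nonneg (sub_nonneg.2 hy12.le) (sub_nonneg.2 h02.le),
    div_nonneg (sub_nonneg.2 hy01.le) (sub_nonneg.2 h02.le), ?_⟩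
  intro z _ hz1 _ _
  have hy : (y₀ : ℂ) ≠ y₂ := Complex.ofReal_injective.ne h02.ne
  rw [eval_Nq_X_sub_C_ofReal_mul, eval_Nq_X_sub_C_ofReal_mul]
  refine div_eq_add_of_mul_add_mul_eq ?_ (sub_ne_zero.2 hz1) _ _
  push_cast
  exact barycentric_combination_sub hy _ _

theorem cone_decomposition {n : ℕ} (a b : ℝ) (x : Fin (2 * n) → ℝ) (hx : StrictMono x)
    (hax : ∀ i, a < x i) (hxb : ∀ i, x i < b)
    (q : Polynomial ℂ) (hq : q ∈ Polynomial.degreeLT ℂ n)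
    (y₀ y₁ y₂ : ℝ) (hy01 : y₀ < y₁) (hy12 : y₁ < y₂)
    (hy0 : y₀ ∈ Set.Ioo a b) (hy1 : y₁ ∈ Set.Ioo a b) (hy2 : y₂ ∈ Set.Ioo a b)
    (hdisj : ∀ i, y₀ ≠ x i ∧ y₁ ≠ x i ∧ y₂ ≠ x i) :
    0 ≤ (y₂ - y₁) / (y₂ - y₀) ∧ 0 ≤ (y₁ - y₀) / (y₂ - y₀) ∧
    ∀ z : ℂ, z ≠ (y₀ : ℂ) → z ≠ (y₁ : ℂ) → z ≠ (y₂ : ℂ) → (∀ i, z ≠ (x i : ℂ)) →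
      (Nq q).eval z / ∏ i, (z - (x i : ℂ)) =
        (((y₂ - y₁) / (y₂ - y₀) : ℝ) : ℂ) *
          ((Nq ((X - Polynomial.C (y₀ : ℂ)) * q)).eval z /
            ((z - (y₀ : ℂ)) * (z - (y₁ : ℂ)) * ∏ i, (z - (x i : ℂ)))) +
        (((y₁ - y₀) / (y₂ - y₀) : ℝ) : ℂ) *
          ((Nq ((X - Polynomial.C (y₂ : ℂ)) * q)).eval z /
            ((z - (y₁ : ℂ)) * (z - (y₂ : ℂ)) * ∏ i, (z - (x i : ℂ)))) :=
  cone_decomposition_general x q y₀ y₁ y₂ hy01 hy12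
end

section
/- Let n be a positive integer and p a polynomial with complex coefficients. Then the following are equivalent: (1) p has real coefficients, is nonnegative on ℝ, and has degree at most 2n; (2) p = q₁² + q₂² for some real polynomials q₁, q₂ of degree at most n; (3) p = q·q* for some complex polynomial q of degree at most n, where q* is the polynomial with conjugated coefficients. -/
/-!
Let `p` be a real polynomial that is nonnegative on `ℝ`, and `z` a complex root of `p`. Then
`N(X - z) = X² - 2 Re z · X + |z|²` divides `p`: for non-real `z` because `conj z` is a root too,
for real `z` because a root at a minimum has multiplicity at least two. The quotient is again
nonnegative (off the single point `Re z`, hence everywhere by continuity), so by induction on the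
degree `p = N(q)`, and then `deg p = 2 deg q`. Writing `q = a + i b` with real `a`, `b` turns
`N(q)` into `a² + b²`, and conversely.
-/

open Polynomial ComplexConjugate

namespace Polynomial

lemma map_conj_map_ofReal (a : ℝ[X]) :
    (a.map (algebraMap ℝ ℂ)).map conj = a.map (algebraMap ℝ ℂ) := by
  rw [map_map, show (starRingEnd ℂ).comp (algebraMap ℝ ℂ) = algebraMap ℝ ℂ from
    RingHom.ext Complex.conj_ofReal]

lemma natDegree_mul_map_conj (q : ℂ[X]) : (q * q.map conj).natDegree = 2 * q.natDegree := by
  rcases eq_or_ne q 0 with rfl | hq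
  · simp
  rw [natDegree_mul hq ((Polynomial.map_ne_zero_iff (RingHom.injective _)).2 hq),
    natDegree_map_eq_of_injective (RingHom.injective _), two_mul]

lemma map_conj_map_add_C_I_mul_map (a b : ℝ[X]) :
    (a.map (algebraMap ℝ ℂ) + C Complex.I * b.map (algebraMap ℝ ℂ)).map conj =
      a.map (algebraMap ℝ ℂ) - C Complex.I * b.map (algebraMap ℝ ℂ) := by
  rw [Polynomial.map_add, Polynomial.map_mul, map_C, map_conj_map_ofReal, map_conj_map_ofReal,
    Complex.conj_I, map_neg, neg_mul, sub_eq_add_neg]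

lemma map_add_C_I_mul_map_mul_map_conj (a b : ℝ[X]) :
    (a.map (algebraMap ℝ ℂ) + C Complex.I * b.map (algebraMap ℝ ℂ)) *
        (a.map (algebraMap ℝ ℂ) + C Complex.I * b.map (algebraMap ℝ ℂ)).map conj =
      (a ^ 2 + b ^ 2).map (algebraMap ℝ ℂ) := by
  have hI : (C Complex.I : ℂ[X]) ^ 2 = -1 := by rw [← C_pow, Complex.I_sq, C_neg, C_1]
  rw [map_conj_map_add_C_I_mul_map, Polynomial.map_add, Polynomial.map_pow, Polynomial.map_pow]
  linear_combination (-(b.map (algebraMap ℝ ℂ)) ^ 2) * hI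

-- `Complex.re` is not a ring hom, so `Polynomial.map` does not apply: map the coefficients.
noncomputable def re (q : ℂ[X]) : ℝ[X] :=
  ⟨⟨q.toFinsupp.coeff.mapRange Complex.re Complex.zero_re⟩⟩

noncomputable def im (q : ℂ[X]) : ℝ[X] :=
  ⟨⟨q.toFinsupp.coeff.mapRange Complex.im Complex.zero_im⟩⟩

@[simp]
lemma coeff_re (q : ℂ[X]) (k : ℕ) : q.re.coeff k = (q.coeff k).re := rfl

@[simp]
lemma coeff_im (q : ℂ[X]) (k : ℕ) : q.im.coeff k = (q.coeff k).im := rfl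

lemma natDegree_re_le (q : ℂ[X]) : q.re.natDegree ≤ q.natDegree :=
  natDegree_le_iff_coeff_eq_zero.2 fun _ hk => by simp [coeff_eq_zero_of_natDegree_lt hk]

lemma natDegree_im_le (q : ℂ[X]) : q.im.natDegree ≤ q.natDegree :=
  natDegree_le_iff_coeff_eq_zero.2 fun _ hk => by simp [coeff_eq_zero_of_natDegree_lt hk]

lemma map_re_add_C_I_mul_map_im (q : ℂ[X]) :
    q.re.map (algebraMap ℝ ℂ) + C Complex.I * q.im.map (algebraMap ℝ ℂ) = q := by
  ext k
  simp [mul_comm Complex.I, Complex.re_add_im]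

lemma mul_map_conj_eq_map_re_sq_add_im_sq (q : ℂ[X]) :
    q * q.map conj = (q.re ^ 2 + q.im ^ 2).map (algebraMap ℝ ℂ) := by
  conv_lhs => rw [← map_re_add_C_I_mul_map_im q]
  exact map_add_C_I_mul_map_mul_map_conj _ _

noncomputable def normSqXSubC (z : ℂ) : ℝ[X] := X ^ 2 - C (2 * z.re) * X + C (‖z‖ ^ 2)

lemma map_normSqXSubC (z : ℂ) :
    (normSqXSubC z).map (algebraMap ℝ ℂ) = (X - C z) * (X - C z).map conj := by
  simp only [normSqXSubC, Polynomial.map_add, Polynomial.map_sub, Polynomial.map_mul,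
    Polynomial.map_pow, map_X, map_C, Complex.coe_algebraMap]
  rw [← Complex.add_conj, Complex.ofReal_pow, ← Complex.mul_conj', map_add, map_mul]
  ring

lemma eval_normSqXSubC (z : ℂ) (x : ℝ) : (normSqXSubC z).eval x = ‖(x : ℂ) - z‖ ^ 2 := by
  simp only [normSqXSubC, eval_add, eval_sub, eval_mul, eval_pow, eval_X, eval_C,
    Complex.sq_norm, Complex.normSq_apply, Complex.sub_re, Complex.sub_im, Complex.ofReal_re,
    Complex.ofReal_im]
  ring

lemma natDegree_normSqXSubC (z : ℂ) : (normSqXSubC z).natDegree = 2 := by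
  unfold normSqXSubC
  compute_degree!

lemma normSqXSubC_ofReal (r : ℝ) : normSqXSubC r = (X - C r) ^ 2 := by
  simp only [normSqXSubC, Complex.ofReal_re, Complex.norm_real, Real.norm_eq_abs, sq_abs,
    C_mul, C_pow, map_ofNat]
  ring

lemma sq_X_sub_C_dvd_of_isRoot_of_nonneg {p : ℝ[X]} (hp : ∀ x, 0 ≤ p.eval x) {r : ℝ}
    (hr : p.IsRoot r) : (X - C r) ^ 2 ∣ p := by
  rcases eq_or_ne p 0 with rfl | hp0
  · exact dvd_zero _
  have hmin : IsLocalMin (fun x => p.eval x) r :=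
    IsMinOn.isLocalMin (fun x _ => by simpa [hr.eq_zero] using hp x) Filter.univ_mem
  have hderiv : p.derivative.IsRoot r := by simpa using hmin.deriv_eq_zero
  exact (le_rootMultiplicity_iff hp0).1
    ((one_lt_rootMultiplicity_iff_isRoot hp0).2 ⟨hr, hderiv⟩)

lemma normSqXSubC_dvd_of_nonneg {p : ℝ[X]} (hp : ∀ x, 0 ≤ p.eval x) {z : ℂ}
    (hz : aeval z p = 0) : normSqXSubC z ∣ p := by
  by_cases him : z.im = 0
  · obtain ⟨r, rfl⟩ : ∃ r : ℝ, z = r := ⟨z.re, Complex.ext rfl him⟩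
    rw [normSqXSubC_ofReal]
    refine sq_X_sub_C_dvd_of_isRoot_of_nonneg hp ?_
    rwa [IsRoot.def, ← Complex.ofReal_inj, Complex.ofReal_zero, ← Complex.coe_algebraMap,
      ← aeval_algebraMap_apply_eq_algebraMap_eval]
  · exact p.quadratic_dvd_of_aeval_eq_zero_im_ne_zero hz him

lemma eval_nonneg_of_normSqXSubC_mul {z : ℂ} {g : ℝ[X]}
    (h : ∀ x, 0 ≤ (normSqXSubC z * g).eval x) (x : ℝ) : 0 ≤ g.eval x := by
  have hne : {z.re}ᶜ ⊆ {x | 0 ≤ g.eval x} := fun x hx => by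
    have hpos : 0 < (normSqXSubC z).eval x := by
      rw [eval_normSqXSubC]
      refine pow_pos (norm_pos_iff.2 (sub_ne_zero.2 fun hxz => hx ?_)) 2
      simp [← hxz]
    exact (mul_nonneg_iff_of_pos_left hpos).1 (by simpa using h x)
  have hclosed : IsClosed {x | 0 ≤ g.eval x} := isClosed_le continuous_const g.continuous
  exact hclosed.closure_subset_iff.2 hne ((dense_compl_singleton z.re).closure_eq ▸ trivial)

theorem exists_map_eq_mul_map_conj_of_nonneg {p : ℝ[X]} (hp : ∀ x, 0 ≤ p.eval x) :
    ∃ q : ℂ[X], p.map (algebraMap ℝ ℂ) = q * q.map conj := by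
  induction hd : p.natDegree using Nat.strong_induction_on generalizing p with
  | _ d ih =>
  rcases Nat.eq_zero_or_pos d with rfl | hd0
  · rw [eq_C_of_natDegree_eq_zero hd] at hp ⊢
    have hc : 0 ≤ p.coeff 0 := by simpa using hp 0
    refine ⟨C (Real.sqrt (p.coeff 0) : ℂ), ?_⟩
    rw [map_C, map_C, Complex.conj_ofReal, ← C_mul, ← Complex.ofReal_mul,
      Real.mul_self_sqrt hc, Complex.coe_algebraMap]
  obtain ⟨z, hz⟩ := IsAlgClosed.exists_aeval_eq_zero ℂ p
    (natDegree_pos_iff_degree_pos.1 (hd ▸ hd0)).ne'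
  obtain ⟨g, rfl⟩ := normSqXSubC_dvd_of_nonneg hp hz
  have hg0 : g ≠ 0 := by rintro rfl; rw [mul_zero, natDegree_zero] at hd; omega
  have hz0 : normSqXSubC z ≠ 0 := ne_zero_of_natDegree_gt (natDegree_normSqXSubC z ▸ two_pos)
  have hgd : g.natDegree < d := by
    rw [← hd, natDegree_mul hz0 hg0, natDegree_normSqXSubC]
    omega
  obtain ⟨q, hq⟩ := ih _ hgd (eval_nonneg_of_normSqXSubC_mul hp) rfl
  refine ⟨(X - C z) * q, ?_⟩
  rw [Polynomial.map_mul, map_normSqXSubC, hq, Polynomial.map_mul]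
  ring

end Polynomial

theorem nonneg_poly_tfae_general (n : ℕ) (p : Polynomial ℂ) :
    (((∃ pr : Polynomial ℝ, p = pr.map (algebraMap ℝ ℂ) ∧ ∀ x : ℝ, 0 ≤ pr.eval x) ∧
        p.natDegree ≤ 2 * n) ↔
      (∃ q₁ q₂ : Polynomial ℝ, q₁.natDegree ≤ n ∧ q₂.natDegree ≤ n ∧
        p = (q₁ ^ 2 + q₂ ^ 2).map (algebraMap ℝ ℂ))) ∧
    ((∃ q₁ q₂ : Polynomial ℝ, q₁.natDegree ≤ n ∧ q₂.natDegree ≤ n ∧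
        p = (q₁ ^ 2 + q₂ ^ 2).map (algebraMap ℝ ℂ)) ↔
      (∃ q : Polynomial ℂ, q.natDegree ≤ n ∧ p = q * q.map (starRingEnd ℂ))) := by
  have h32 : (∃ q : ℂ[X], q.natDegree ≤ n ∧ p = q * q.map conj) →
      ∃ q₁ q₂ : ℝ[X], q₁.natDegree ≤ n ∧ q₂.natDegree ≤ n ∧
        p = (q₁ ^ 2 + q₂ ^ 2).map (algebraMap ℝ ℂ) := by
    rintro ⟨q, hq, rfl⟩
    exact ⟨q.re, q.im, (natDegree_re_le q).trans hq, (natDegree_im_le q).trans hq,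
      mul_map_conj_eq_map_re_sq_add_im_sq q⟩
  refine ⟨⟨fun ⟨⟨pr, hp, hpr⟩, hdeg⟩ => h32 ?_, ?_⟩, ⟨?_, h32⟩⟩
  · obtain ⟨q, hq⟩ := exists_map_eq_mul_map_conj_of_nonneg hpr
    rw [hp, hq, natDegree_mul_map_conj] at hdeg
    exact ⟨q, by omega, hp.trans hq⟩
  · rintro ⟨q₁, q₂, h₁, h₂, rfl⟩
    refine ⟨⟨_, rfl, fun x => by simp only [eval_add, eval_pow]; positivity⟩, ?_⟩
    refine natDegree_map_le.trans (natDegree_add_le_of_degree_le ?_ ?_) <;>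
      exact natDegree_pow_le_of_le 2 ‹_›
  · rintro ⟨q₁, q₂, h₁, h₂, rfl⟩
    refine ⟨_, ?_, (map_add_C_I_mul_map_mul_map_conj q₁ q₂).symm⟩
    exact natDegree_add_le_of_degree_le (natDegree_map_le.trans h₁)
      ((natDegree_C_mul_le _ _).trans (natDegree_map_le.trans h₂))

theorem nonneg_poly_tfae (n : ℕ) (hn : 0 < n) (p : Polynomial ℂ) :
    (((∃ pr : Polynomial ℝ, p = pr.map (algebraMap ℝ ℂ) ∧ ∀ x : ℝ, 0 ≤ pr.eval x) ∧
        p.natDegree ≤ 2 * n) ↔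
      (∃ q₁ q₂ : Polynomial ℝ, q₁.natDegree ≤ n ∧ q₂.natDegree ≤ n ∧
        p = (q₁ ^ 2 + q₂ ^ 2).map (algebraMap ℝ ℂ))) ∧
    ((∃ q₁ q₂ : Polynomial ℝ, q₁.natDegree ≤ n ∧ q₂.natDegree ≤ n ∧
        p = (q₁ ^ 2 + q₂ ^ 2).map (algebraMap ℝ ℂ)) ↔
      (∃ q : Polynomial ℂ, q.natDegree ≤ n ∧ p = q * q.map (starRingEnd ℂ))) :=
  nonneg_poly_tfae_general n p
end

section
/- Let a < c < b < d and f : (a,d) → ℝ be such that the restrictions of f to (a,b) and to (c,d) are both k-tone. Then f is k-tone on (a,d). -/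
/-!
Adjoin `k` auxiliary nodes in `(c, b)` to the given `k + 1` nodes. A block of `k + 1`
consecutive nodes of the enlarged set cannot contain both a node `≤ c` and a node `≥ b`, since it
would then also contain the `k` auxiliary nodes; so each block lies in `(a, b)` or in `(c, d)`.
The identity `(β - α) [α, s, β] = (β - μ) [μ, s, β] + (μ - α) [α, s, μ]` writes a divided
difference whose nodes skip a node `μ` as a positive combination of two divided differences whose
nodes span fewer points of the enlarged set, so by induction every divided difference on `k + 1`
of its nodes is nonnegative.
-/

open Finset

/-- Divided difference of order `m - 1` at pairwise distinct points. -/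
noncomputable def divDiff (f : ℝ → ℝ) {m : ℕ} (x : Fin m → ℝ) : ℝ :=
  ∑ i, f (x i) / ∏ j ∈ Finset.univ.erase i, (x i - x j)

lemma card_insert_insert {ι : Type*} [DecidableEq ι] {s : Finset ι} {a b : ι} (hab : a ≠ b)
    (ha : a ∉ s) (hb : b ∉ s) :
    (insert a (insert b s)).card = s.card + 2 := by
  rw [card_insert_of_notMem (by simp [hab, ha]), card_insert_of_notMem hb]

section Field

variable {𝕜 : Type*} [Field 𝕜]

lemma prod_sub_ne_zero {x : 𝕜} {s : Finset 𝕜} (hx : x ∉ s) : ∏ y ∈ s, (x - y) ≠ 0 :=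
  prod_ne_zero_iff.2 fun _ hy => sub_ne_zero.2 fun h => hx (h ▸ hy)

variable [DecidableEq 𝕜]

noncomputable def finsetDivDiff (f : 𝕜 → 𝕜) (s : Finset 𝕜) : 𝕜 :=
  ∑ x ∈ s, f x / ∏ y ∈ s.erase x, (x - y)

lemma finsetDivDiff_insert (f : 𝕜 → 𝕜) {s : Finset 𝕜} {p : 𝕜} (hp : p ∉ s) :
    finsetDivDiff f (insert p s) =
      f p / ∏ y ∈ s, (p - y) + ∑ x ∈ s, f x / ((x - p) * ∏ y ∈ s.erase x, (x - y)) := by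
  rw [finsetDivDiff, sum_insert hp, erase_insert hp]
  congr 1
  refine sum_congr rfl fun x hx => ?_
  have hxp : p ≠ x := fun h => hp (h ▸ hx)
  rw [erase_insert_of_ne hxp, prod_insert fun h => hp (erase_subset _ _ h)]

lemma sub_mul_finsetDivDiff_insert_insert (f : 𝕜 → 𝕜) {s : Finset 𝕜} {p q : 𝕜}
    (hp : p ∉ s) (hq : q ∉ s) (hpq : p ≠ q) :
    (p - q) * finsetDivDiff f (insert p (insert q s)) =
      finsetDivDiff f (insert p s) - finsetDivDiff f (insert q s) := by
  have hp' : p ∉ insert q s := by simp [hpq, hp]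
  have hsum : ∑ x ∈ insert q s, f x / ((x - p) * ∏ y ∈ (insert q s).erase x, (x - y)) =
      f q / ((q - p) * ∏ y ∈ s, (q - y)) +
        ∑ x ∈ s, f x / ((x - p) * ((x - q) * ∏ y ∈ s.erase x, (x - y))) := by
    rw [sum_insert hq, erase_insert hq]
    congr 1
    refine sum_congr rfl fun x hx => ?_
    have hxq : q ≠ x := fun h => hq (h ▸ hx)
    rw [erase_insert_of_ne hxq, prod_insert fun h => hq (erase_subset _ _ h)]
  have hpartial : (p - q) * ∑ x ∈ s, f x / ((x - p) * ((x - q) * ∏ y ∈ s.erase x, (x - y))) =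
      ∑ x ∈ s, f x / ((x - p) * ∏ y ∈ s.erase x, (x - y)) -
        ∑ x ∈ s, f x / ((x - q) * ∏ y ∈ s.erase x, (x - y)) := by
    rw [mul_sum, ← sum_sub_distrib]
    refine sum_congr rfl fun x hx => ?_
    have hxp : x - p ≠ 0 := sub_ne_zero.2 fun h => hp (h ▸ hx)
    have hxq : x - q ≠ 0 := sub_ne_zero.2 fun h => hq (h ▸ hx)
    have hw := prod_sub_ne_zero (notMem_erase x s)
    field_simp
    ring
  rw [finsetDivDiff_insert f hp', finsetDivDiff_insert f hp, finsetDivDiff_insert f hq,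
    prod_insert hq, hsum]
  have hWp := prod_sub_ne_zero hp
  have hWq := prod_sub_ne_zero hq
  have hpq' : p - q ≠ 0 := sub_ne_zero.2 hpq
  have hqp' : q - p ≠ 0 := sub_ne_zero.2 hpq.symm
  have hp_term : (p - q) * (f p / ((p - q) * ∏ y ∈ s, (p - y))) = f p / ∏ y ∈ s, (p - y) := by
    field_simp
  have hq_term : (p - q) * (f q / ((q - p) * ∏ y ∈ s, (q - y))) = -(f q / ∏ y ∈ s, (q - y)) := by
    field_simp
    ring
  linear_combination hp_term + hq_term + hpartial

lemma sub_mul_finsetDivDiff_eq_add (f : 𝕜 → 𝕜) {s : Finset 𝕜} {α β μ : 𝕜}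
    (hα : α ∉ s) (hβ : β ∉ s) (hμ : μ ∉ s) (hαμ : α ≠ μ) (hμβ : μ ≠ β) (hαβ : α ≠ β) :
    (β - α) * finsetDivDiff f (insert α (insert β s)) =
      (β - μ) * finsetDivDiff f (insert μ (insert β s)) +
        (μ - α) * finsetDivDiff f (insert α (insert μ s)) := by
  have E₁ := sub_mul_finsetDivDiff_insert_insert f (s := insert β s)
    (by simp [hμβ, hμ]) (by simp [hαβ, hα]) hαμ.symm
  have E₂ := sub_mul_finsetDivDiff_insert_insert f (s := insert μ s)
    (by simp [hμβ.symm, hβ]) (by simp [hαμ, hα]) hαβ.symm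
  rw [insert_comm μ α] at E₁
  rw [insert_comm β α, insert_comm β μ] at E₂
  linear_combination (β - α) * E₁ - (μ - α) * E₂

end Field

section LinearOrder

variable {𝕜 : Type*} [LinearOrder 𝕜]

def IsConsecutiveIn (s t : Finset 𝕜) : Prop :=
  ∀ x ∈ s, ∀ y ∈ s, ∀ z ∈ t, x ≤ z → z ≤ y → z ∈ s

def hullIn (t s : Finset 𝕜) : Finset 𝕜 :=
  t.filter fun z => ∃ x ∈ s, ∃ y ∈ s, x ≤ z ∧ z ≤ y

lemma card_hullIn_lt {s s' t : Finset 𝕜} {α β w : 𝕜} (hα : α ∈ s) (hβ : β ∈ s)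
    (hs' : ∀ z ∈ s', α ≤ z ∧ z ≤ β) (hwt : w ∈ t) (hws : w ∈ s)
    (hws' : (∀ z ∈ s', w < z) ∨ ∀ z ∈ s', z < w) :
    (hullIn t s').card < (hullIn t s).card := by
  refine card_lt_card ((ssubset_iff_of_subset fun z hz => ?_).2 ⟨w, ?_, fun hw => ?_⟩)
  · obtain ⟨hzt, x, hx, y, hy, hxz, hzy⟩ := mem_filter.1 hz
    exact mem_filter.2 ⟨hzt, α, hα, β, hβ, (hs' x hx).1.trans hxz, hzy.trans (hs' y hy).2⟩
  · exact mem_filter.2 ⟨hwt, w, hws, w, hws, le_rfl, le_rfl⟩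
  · obtain ⟨-, x, hx, y, hy, hxw, hwy⟩ := mem_filter.1 hw
    rcases hws' with h | h
    · exact (h x hx).not_ge hxw
    · exact (h y hy).not_ge hwy

lemma exists_eq_insert_insert_of_not_isConsecutiveIn {s t : Finset 𝕜}
    (h : ¬ IsConsecutiveIn s t) :
    ∃ α μ β s₀, α < μ ∧ μ < β ∧ μ ∈ t ∧ μ ∉ s₀ ∧ (∀ z ∈ s₀, α < z ∧ z < β) ∧
      insert α (insert β s₀) = s := by
  simp only [IsConsecutiveIn, not_forall, exists_prop] at h
  obtain ⟨x, hx, y, hy, μ, hμt, hxμ, hμy, hμs⟩ := h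
  have hne : s.Nonempty := ⟨x, hx⟩
  have hαμ : s.min' hne < μ := (s.min'_le x hx).trans_lt (hxμ.lt_of_ne fun h => hμs (h ▸ hx))
  have hμβ : μ < s.max' hne := (hμy.lt_of_ne fun h => hμs (h ▸ hy)).trans_le (s.le_max' y hy)
  refine ⟨s.min' hne, μ, s.max' hne, (s.erase (s.min' hne)).erase (s.max' hne), hαμ, hμβ, hμt,
    fun h => hμs (mem_of_mem_erase (mem_of_mem_erase h)), fun z hz => ?_, ?_⟩
  · obtain ⟨hzβ, hzα, hzs⟩ : z ≠ s.max' hne ∧ z ≠ s.min' hne ∧ z ∈ s := by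
      simpa only [mem_erase, and_assoc] using hz
    exact ⟨(s.min'_le z hzs).lt_of_ne' hzα, (s.le_max' z hzs).lt_of_ne hzβ⟩
  · rw [insert_erase (mem_erase.2 ⟨(hαμ.trans hμβ).ne', s.max'_mem hne⟩),
      insert_erase (s.min'_mem hne)]

lemma IsConsecutiveIn.forall_lt_or_forall_gt {s t Z : Finset 𝕜} {b c : 𝕜} {k : ℕ}
    (hs : IsConsecutiveIn s t) (hcard : s.card ≤ k + 1) (hcb : c < b) (hZt : Z ⊆ t)
    (hZ : ↑Z ⊆ Set.Ioo c b) (hZcard : Z.card = k) :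
    (∀ z ∈ s, z < b) ∨ ∀ z ∈ s, c < z := by
  by_contra! h
  obtain ⟨⟨v, hv, hbv⟩, ⟨u, hu, huc⟩⟩ := h
  have huZ : u ∉ Z := fun h => (hZ h).1.not_ge huc
  have hvZ : v ∉ Z := fun h => (hZ h).2.not_ge hbv
  have hsub : insert u (insert v Z) ⊆ s := by
    refine insert_subset hu (insert_subset hv fun z hz => ?_)
    exact hs u hu v hv z (hZt hz) (huc.trans (hZ hz).1.le) ((hZ hz).2.le.trans hbv)
  have := card_le_card hsub
  rw [card_insert_insert ((huc.trans_lt hcb).trans_le hbv).ne huZ hvZ] at this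
  omega

end LinearOrder

section OrderedField

variable {𝕜 : Type*} [Field 𝕜] [LinearOrder 𝕜] [IsStrictOrderedRing 𝕜]

lemma finsetDivDiff_nonneg_of_between (f : 𝕜 → 𝕜) {s : Finset 𝕜} {α β μ : 𝕜}
    (hα : α ∉ s) (hβ : β ∉ s) (hμ : μ ∉ s) (hαμ : α < μ) (hμβ : μ < β)
    (h₁ : 0 ≤ finsetDivDiff f (insert μ (insert β s)))
    (h₂ : 0 ≤ finsetDivDiff f (insert α (insert μ s))) :
    0 ≤ finsetDivDiff f (insert α (insert β s)) := by
  have hαβ := hαμ.trans hμβ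
  refine (mul_nonneg_iff_of_pos_left (sub_pos.2 hαβ)).1 ?_
  rw [sub_mul_finsetDivDiff_eq_add f hα hβ hμ hαμ.ne hμβ.ne hαβ.ne]
  exact add_nonneg (mul_nonneg (sub_pos.2 hμβ).le h₁) (mul_nonneg (sub_pos.2 hαμ).le h₂)

theorem finsetDivDiff_nonneg_of_isConsecutiveIn (f : 𝕜 → 𝕜) {t : Finset 𝕜} {n : ℕ}
    (H : ∀ s ⊆ t, s.card = n → IsConsecutiveIn s t → 0 ≤ finsetDivDiff f s)
    (s : Finset 𝕜) (hst : s ⊆ t) (hcard : s.card = n) : 0 ≤ finsetDivDiff f s := by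
  by_cases hcons : IsConsecutiveIn s t
  · exact H s hst hcard hcons
  obtain ⟨α, μ, β, s₀, hαμ, hμβ, hμt, hμs₀, hs₀, rfl⟩ :=
    exists_eq_insert_insert_of_not_isConsecutiveIn hcons
  have hαs₀ : α ∉ s₀ := fun h => (hs₀ α h).1.false
  have hβs₀ : β ∉ s₀ := fun h => (hs₀ β h).2.false
  have hαβ := hαμ.trans hμβ
  rw [card_insert_insert hαβ.ne hαs₀ hβs₀] at hcard
  simp only [insert_subset_iff] at hst
  have hα : α ∈ insert α (insert β s₀) := mem_insert_self _ _
  have hβ : β ∈ insert α (insert β s₀) := mem_insert_of_mem (mem_insert_self _ _)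
  have hs₁ : ∀ z ∈ insert μ (insert β s₀), α ≤ z ∧ z ≤ β := by
    simp only [forall_mem_insert]
    exact ⟨⟨hαμ.le, hμβ.le⟩, ⟨hαβ.le, le_rfl⟩, fun z hz => ⟨(hs₀ z hz).1.le, (hs₀ z hz).2.le⟩⟩
  have hs₂ : ∀ z ∈ insert α (insert μ s₀), α ≤ z ∧ z ≤ β := by
    simp only [forall_mem_insert]
    exact ⟨⟨le_rfl, hαβ.le⟩, ⟨hαμ.le, hμβ.le⟩, fun z hz => ⟨(hs₀ z hz).1.le, (hs₀ z hz).2.le⟩⟩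
  have hα₁ : ∀ z ∈ insert μ (insert β s₀), α < z := by
    simp only [forall_mem_insert]
    exact ⟨hαμ, hαβ, fun z hz => (hs₀ z hz).1⟩
  have hβ₂ : ∀ z ∈ insert α (insert μ s₀), z < β := by
    simp only [forall_mem_insert]
    exact ⟨hαβ, hμβ, fun z hz => (hs₀ z hz).2⟩
  -- the termination measure drops: `α` leaves the hull of the first set, `β` that of the second
  have hdec₁ := card_hullIn_lt (t := t) hα hβ hs₁ hst.1 hα (Or.inl hα₁)
  have hdec₂ := card_hullIn_lt (t := t) hα hβ hs₂ hst.2.1 hβ (Or.inr hβ₂)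
  exact finsetDivDiff_nonneg_of_between f hαs₀ hβs₀ hμs₀ hαμ hμβ
    (finsetDivDiff_nonneg_of_isConsecutiveIn f H _
      (insert_subset hμt (insert_subset hst.2.1 hst.2.2))
      (by rw [card_insert_insert hμβ.ne hμs₀ hβs₀, hcard]))
    (finsetDivDiff_nonneg_of_isConsecutiveIn f H _
      (insert_subset hst.1 (insert_subset hμt hst.2.2))
      (by rw [card_insert_insert hαμ.ne hαs₀ hμs₀, hcard]))
termination_by (hullIn t s).card

def KToneOn (k : ℕ) (f : 𝕜 → 𝕜) (I : Set 𝕜) : Prop :=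
  ∀ s : Finset 𝕜, ↑s ⊆ I → s.card = k + 1 → 0 ≤ finsetDivDiff f s

theorem KToneOn.of_Ioo_Ioo {k : ℕ} {f : 𝕜 → 𝕜} {a b c d : 𝕜}
    (h₁ : KToneOn k f (Set.Ioo a b)) (h₂ : KToneOn k f (Set.Ioo c d))
    (hac : a ≤ c) (hcb : c < b) (hbd : b ≤ d) : KToneOn k f (Set.Ioo a d) := by
  intro S hS hcard
  obtain ⟨Z, hZ, hZcard⟩ := (Set.Ioo_infinite hcb).exists_subset_card_eq k
  refine finsetDivDiff_nonneg_of_isConsecutiveIn f (t := S ∪ Z) (fun s hst hs hcons => ?_) S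
    subset_union_left hcard
  have hsI : ∀ z ∈ s, z ∈ Set.Ioo a d := fun z hz => by
    rcases mem_union.1 (hst hz) with hzS | hzZ
    · exact hS hzS
    · exact ⟨hac.trans_lt (hZ hzZ).1, (hZ hzZ).2.trans_le hbd⟩
  rcases hcons.forall_lt_or_forall_gt hs.le hcb subset_union_right hZ hZcard with hb | hc
  · exact h₁ s (fun z hz => ⟨(hsI z hz).1, hb z hz⟩) hs
  · exact h₂ s (fun z hz => ⟨hc z hz, (hsI z hz).2⟩) hs

end OrderedField

lemma divDiff_eq_finsetDivDiff_image (f : ℝ → ℝ) {m : ℕ} {x : Fin m → ℝ}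
    (hx : Function.Injective x) : divDiff f x = finsetDivDiff f (univ.image x) := by
  rw [divDiff, finsetDivDiff, sum_image fun i _ j _ h => hx h]
  refine sum_congr rfl fun i _ => ?_
  rw [← image_erase hx, prod_image fun j _ l _ h => hx h]

lemma kToneOn_iff (k : ℕ) (f : ℝ → ℝ) (I : Set ℝ) :
    KToneOn k f I ↔
      ∀ x : Fin (k + 1) → ℝ, (∀ i, x i ∈ I) → Function.Injective x → 0 ≤ divDiff f x := by
  refine ⟨fun h x hxI hx => ?_, fun h s hsI hcard => ?_⟩
  · rw [divDiff_eq_finsetDivDiff_image f hx]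
    refine h _ (by simpa [Set.subset_def] using hxI) ?_
    rw [card_image_of_injective _ hx, card_univ, Fintype.card_fin]
  · have := h (s.orderEmbOfFin hcard) (fun i => hsI (s.orderEmbOfFin_mem hcard i))
      (s.orderEmbOfFin hcard).injective
    rwa [divDiff_eq_finsetDivDiff_image f (s.orderEmbOfFin hcard).injective,
      image_orderEmbOfFin_univ] at this

theorem kTone_local (k : ℕ) (a b c d : ℝ) (hac : a < c) (hcb : c < b) (hbd : b < d)
    (f : ℝ → ℝ)
    (h₁ : ∀ x : Fin (k + 1) → ℝ, (∀ i, x i ∈ Set.Ioo a b) → Function.Injective x →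
      0 ≤ divDiff f x)
    (h₂ : ∀ x : Fin (k + 1) → ℝ, (∀ i, x i ∈ Set.Ioo c d) → Function.Injective x →
      0 ≤ divDiff f x) :
    ∀ x : Fin (k + 1) → ℝ, (∀ i, x i ∈ Set.Ioo a d) → Function.Injective x →
      0 ≤ divDiff f x := by
  rw [← kToneOn_iff] at h₁ h₂ ⊢
  exact h₁.of_Ioo_Ioo h₂ hac.le hcb hbd.le
end

section
/- Let x₀ < x₁ < ... < xₖ be real numbers and let y₀ < y₁ < ... < yₙ be a refinement (a supersequence containing all the xᵢ). Then there exist nonnegative real numbers t₀, t₁, ..., t_{n-k} such that for every function f defined at all the yⱼ, [x₀, x₁, ..., xₖ]_f = Σ_{j=0}^{n-k} tⱼ·[yⱼ, y_{j+1}, ..., y_{j+k}]_f. -/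
/-!
By the recurrence `[s ∖ {a}] - [s ∖ {b}] = (z_b - z_a) [s]`, the divided difference at
`z₀ < ⋯ < z_{k+1}` with one interior node `z_r` omitted is the convex combination, with weight
`(z_{k+1} - z_r) / (z_{k+1} - z₀)`, of the divided differences with the first and with the last
node omitted. Deleting one node `y_r` from `y` therefore turns every window `y_j, …, y_{j+k}`
into a window of `y` or into a convex combination of two consecutive windows of `y`, so the
cone spanned by the window divided differences can only grow when nodes are added. Adding the
nodes of `y` to `x` one at a time proves the theorem.
-/

open Finset

section DivDiffOn

variable {K ι : Type*} [Field K] [DecidableEq ι]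

noncomputable def divDiffOn (f : K → K) (z : ι → K) (s : Finset ι) : K :=
  ∑ i ∈ s, f (z i) / ∏ j ∈ s.erase i, (z i - z j)

theorem divDiffOn_erase_eq_sum {f : K → K} {z : ι → K} {s : Finset ι} (hz : Set.InjOn z s)
    {c : ι} (hc : c ∈ s) :
    divDiffOn f z (s.erase c) =
      ∑ i ∈ s, f (z i) * (z i - z c) / ∏ j ∈ s.erase i, (z i - z j) := by
  -- the summand at `i = c` vanishes; in the others the factor `z i - z c` cancels
  rw [← sum_erase s (a := c), divDiffOn]
  swap
  · simp
  refine sum_congr rfl fun i hi => ?_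
  obtain ⟨hic, his⟩ := mem_erase.1 hi
  have hne : z i - z c ≠ 0 := sub_ne_zero.2 fun h => hic (hz his hc h)
  rw [erase_right_comm, ← mul_prod_erase _ _ (mem_erase.2 ⟨Ne.symm hic, hc⟩), mul_comm (f (z i)),
    mul_div_mul_left _ _ hne]

theorem divDiffOn_erase_sub_divDiffOn_erase {f : K → K} {z : ι → K} {s : Finset ι}
    (hz : Set.InjOn z s) {a b : ι} (ha : a ∈ s) (hb : b ∈ s) :
    divDiffOn f z (s.erase a) - divDiffOn f z (s.erase b) = (z b - z a) * divDiffOn f z s := by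
  rw [divDiffOn_erase_eq_sum hz ha, divDiffOn_erase_eq_sum hz hb, ← sum_sub_distrib, divDiffOn,
    mul_sum]
  refine sum_congr rfl fun i _ => ?_
  ring

end DivDiffOn

theorem divDiff_comp_embedding {ι : Type*} [DecidableEq ι] {m : ℕ} (f : ℝ → ℝ) (z : ι → ℝ)
    (e : Fin m ↪ ι) : divDiff f (z ∘ e) = divDiffOn f z (univ.map e) := by
  simp only [divDiff, divDiffOn, sum_map, Function.comp_apply, ← map_erase, prod_map]

theorem divDiff_comp_succAbove {m : ℕ} (f : ℝ → ℝ) (z : Fin (m + 1) → ℝ) (a : Fin (m + 1)) :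
    divDiff f (z ∘ a.succAbove) = divDiffOn f z (univ.erase a) := by
  rw [← Fin.coe_succAboveEmb, divDiff_comp_embedding, map_eq_image, Fin.coe_succAboveEmb,
    Fin.image_succAbove_univ, compl_singleton]

theorem divDiff_comp_succAbove_eq {k : ℕ} (f : ℝ → ℝ) {z : Fin (k + 2) → ℝ}
    (hz : Function.Injective z) (r : Fin (k + 2)) :
    divDiff f (z ∘ r.succAbove) =
      (1 - (z (Fin.last _) - z r) / (z (Fin.last _) - z 0)) * divDiff f (z ∘ Fin.castSucc) +
        (z (Fin.last _) - z r) / (z (Fin.last _) - z 0) * divDiff f (z ∘ Fin.succ) := by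
  rw [← Fin.succAbove_last, ← Fin.succAbove_zero]
  simp only [divDiff_comp_succAbove]
  have h_r := divDiffOn_erase_sub_divDiffOn_erase (f := f) hz.injOn (mem_univ r)
    (mem_univ (Fin.last (k + 1)))
  have h_0 := divDiffOn_erase_sub_divDiffOn_erase (f := f) hz.injOn (mem_univ 0)
    (mem_univ (Fin.last (k + 1)))
  have hne : z (Fin.last (k + 1)) - z 0 ≠ 0 := sub_ne_zero.2 (hz.ne Fin.last_pos.ne')
  field_simp
  linear_combination (z (Fin.last (k + 1)) - z 0) * h_r - (z (Fin.last (k + 1)) - z r) * h_0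

theorem divDiff_comp_succAbove_mem_segment {k : ℕ} {z : Fin (k + 2) → ℝ} (hz : StrictMono z)
    (r : Fin (k + 2)) :
    (fun f => divDiff f (z ∘ r.succAbove)) ∈
      segment ℝ (fun f => divDiff f (z ∘ Fin.castSucc)) (fun f => divDiff f (z ∘ Fin.succ)) := by
  have h0 : z 0 < z (Fin.last _) := hz Fin.last_pos
  have hr0 : z 0 ≤ z r := hz.monotone (Fin.zero_le r)
  have hrl : z r ≤ z (Fin.last _) := hz.monotone (Fin.le_last r)
  refine ⟨_, _, ?_, div_nonneg (sub_nonneg.2 hrl) (sub_pos.2 h0).le, sub_add_cancel _ _, ?_⟩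
  · rw [sub_nonneg, div_le_one (sub_pos.2 h0)]
    linarith
  · ext f
    simp only [Pi.add_apply, Pi.smul_apply, smul_eq_mul, divDiff_comp_succAbove_eq f hz.injective]

theorem Fin.val_succAbove_eq_ite {n : ℕ} (p : Fin (n + 1)) (i : Fin n) :
    (p.succAbove i : ℕ) = if (i : ℕ) < p then (i : ℕ) else (i : ℕ) + 1 := by
  unfold Fin.succAbove
  split_ifs <;> simp_all [Fin.lt_def]

section Window

variable {n : ℕ}

def window (y : Fin (n + 1) → ℝ) (k j : ℕ) (hj : j + k ≤ n) : Fin (k + 1) → ℝ :=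
  fun i => y ⟨j + i, by omega⟩

theorem window_eq_comp_castSucc (y : Fin (n + 1) → ℝ) {k j : ℕ} (hj : j + (k + 1) ≤ n) :
    window y k j (by omega) = window y (k + 1) j hj ∘ Fin.castSucc :=
  rfl

theorem window_succ_eq_comp_succ (y : Fin (n + 1) → ℝ) {k j : ℕ} (hj : j + (k + 1) ≤ n) :
    window y k (j + 1) (by omega) = window y (k + 1) j hj ∘ Fin.succ := by
  funext i
  exact congrArg y (Fin.ext (by simp only [Fin.val_succ]; omega))

variable {y : Fin (n + 2) → ℝ} {r : Fin (n + 2)} {k j : ℕ}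

theorem window_comp_succAbove_of_lt (hj : j + k ≤ n) (hr : j + k < r) :
    window (y ∘ r.succAbove) k j hj = window y k j (by omega) := by
  funext i
  refine congrArg y (Fin.ext ?_)
  simp only [Fin.val_succAbove_eq_ite]
  split_ifs <;> omega

theorem window_comp_succAbove_of_le (hj : j + k ≤ n) (hr : r ≤ j) :
    window (y ∘ r.succAbove) k j hj = window y k (j + 1) (by omega) := by
  funext i
  refine congrArg y (Fin.ext ?_)
  simp only [Fin.val_succAbove_eq_ite]
  split_ifs <;> omega

theorem window_comp_succAbove_of_lt_of_le (hj : j + k ≤ n) (hjr : j < r) (hrk : r ≤ j + k) :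
    window (y ∘ r.succAbove) k j hj =
      window y (k + 1) j (by omega) ∘ Fin.succAbove ⟨r - j, by omega⟩ := by
  funext i
  refine congrArg y (Fin.ext ?_)
  simp only [Fin.val_succAbove_eq_ite]
  split_ifs <;> omega

end Window

def windowCone {n : ℕ} (y : Fin (n + 1) → ℝ) (k : ℕ) : PointedCone ℝ ((ℝ → ℝ) → ℝ) :=
  PointedCone.hull ℝ {F | ∃ (j : ℕ) (hj : j + k ≤ n), F = fun f => divDiff f (window y k j hj)}

theorem divDiff_window_mem_windowCone {n : ℕ} (y : Fin (n + 1) → ℝ) {k j : ℕ} (hj : j + k ≤ n) :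
    (fun f => divDiff f (window y k j hj)) ∈ windowCone y k :=
  PointedCone.subset_hull ⟨j, hj, rfl⟩

theorem windowCone_comp_succAbove_le {n k : ℕ} {y : Fin (n + 2) → ℝ} (hy : StrictMono y)
    (r : Fin (n + 2)) : windowCone (y ∘ r.succAbove) k ≤ windowCone y k := by
  refine Submodule.span_le.2 ?_
  rintro _ ⟨j, hj, rfl⟩
  rw [SetLike.mem_coe]
  rcases lt_or_ge (j + k) r with hr | hr
  · rw [window_comp_succAbove_of_lt hj hr]
    exact divDiff_window_mem_windowCone y _
  rcases le_or_gt (r : ℕ) j with hr' | hr'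
  · rw [window_comp_succAbove_of_le hj hr']
    exact divDiff_window_mem_windowCone y _
  have hz : StrictMono (window y (k + 1) j (by omega)) := fun a b hab =>
    hy (Fin.mk_lt_mk.2 (Nat.add_lt_add_left hab j))
  refine (PointedCone.convex _).segment_subset
    (divDiff_window_mem_windowCone y (k := k) (j := j) (by omega))
    (divDiff_window_mem_windowCone y (k := k) (j := j + 1) (by omega)) ?_
  rw [window_comp_succAbove_of_lt_of_le hj hr' hr, window_eq_comp_castSucc y (by omega),
    window_succ_eq_comp_succ y (by omega)]
  exact divDiff_comp_succAbove_mem_segment hz _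

theorem StrictMono.eq_of_range_subset {α : Type*} [LinearOrder α] {m : ℕ} {x y : Fin m → α}
    (hx : StrictMono x) (hy : StrictMono y) (hsub : Set.range x ⊆ Set.range y) : x = y := by
  refine (hx.range_inj hy).1 (Set.eq_of_subset_of_ncard_le hsub ?_)
  rw [Set.ncard_range_of_injective hx.injective, Set.ncard_range_of_injective hy.injective]

theorem exists_apply_notMem_range {α : Type*} {m n : ℕ} (x : Fin m → α) {y : Fin n → α}
    (hy : Function.Injective y) (hmn : m < n) : ∃ r, y r ∉ Set.range x := by
  by_contra! h
  have hy_le := Set.ncard_le_ncard (Set.range_subset_iff.2 h) (Set.finite_range x)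
  rw [Set.ncard_range_of_injective hy, Nat.card_eq_fintype_card, Fintype.card_fin] at hy_le
  have hx_le : (Set.range x).ncard ≤ m := by
    rw [← Set.image_univ]
    exact le_trans Set.ncard_image_le (by simp)
  omega

theorem divDiff_mem_windowCone {k n : ℕ} (hkn : k ≤ n) {x : Fin (k + 1) → ℝ}
    {y : Fin (n + 1) → ℝ} (hx : StrictMono x) (hy : StrictMono y)
    (hsub : Set.range x ⊆ Set.range y) : (fun f => divDiff f x) ∈ windowCone y k := by
  induction n, hkn using Nat.le_induction with
  | base =>
    obtain rfl := hx.eq_of_range_subset hy hsub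
    have hwindow : window x k 0 (by omega) = x := funext fun i => congrArg x (Fin.ext (zero_add _))
    simpa only [hwindow] using divDiff_window_mem_windowCone x (k := k) (j := 0) (by omega)
  | succ n hkn ih =>
    obtain ⟨r, hr⟩ := exists_apply_notMem_range x hy.injective (by omega)
    refine windowCone_comp_succAbove_le hy r (ih (hy.comp (Fin.strictMono_succAbove r)) ?_)
    rintro _ ⟨i, rfl⟩
    obtain ⟨m, hm⟩ := hsub ⟨i, rfl⟩
    obtain ⟨m', rfl⟩ := Fin.exists_succAbove_eq (show m ≠ r by rintro rfl; exact hr ⟨i, hm.symm⟩)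
    exact ⟨m', hm⟩

theorem exists_nonneg_of_mem_windowCone {k n : ℕ} (hkn : k ≤ n) {y : Fin (n + 1) → ℝ}
    {F : (ℝ → ℝ) → ℝ} (hF : F ∈ windowCone y k) :
    ∃ t : Fin (n - k + 1) → ℝ, (∀ j, 0 ≤ t j) ∧
      ∀ f, F f = ∑ j : Fin (n - k + 1), t j * divDiff f (window y k j (by omega)) := by
  have hgen : {F | ∃ (j : ℕ) (hj : j + k ≤ n), F = fun f => divDiff f (window y k j hj)} =
      Set.range fun j : Fin (n - k + 1) => fun f => divDiff f (window y k j (by omega)) := by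
    ext F
    constructor
    · rintro ⟨j, hj, rfl⟩
      exact ⟨⟨j, by omega⟩, rfl⟩
    · rintro ⟨j, rfl⟩
      exact ⟨j, _, rfl⟩
  rw [windowCone, hgen, Submodule.mem_span_range_iff_exists_fun] at hF
  obtain ⟨c, rfl⟩ := hF
  exact ⟨fun j => c j, fun j => (c j).2, fun f => by simp [Finset.sum_apply, ← Nonneg.coe_smul]⟩

theorem divDiff_refinement {k n : ℕ} (hkn : k ≤ n)
    (x : Fin (k + 1) → ℝ) (y : Fin (n + 1) → ℝ)
    (hx : StrictMono x) (hy : StrictMono y) (hsub : Set.range x ⊆ Set.range y) :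
    ∃ t : Fin (n - k + 1) → ℝ, (∀ j, 0 ≤ t j) ∧
      ∀ f : ℝ → ℝ, divDiff f x =
        ∑ j, t j * divDiff f
          (fun i : Fin (k + 1) => y ⟨j.1 + i.1, by have := j.2; have := i.2; omega⟩) :=
  exists_nonneg_of_mem_windowCone hkn (divDiff_mem_windowCone hkn hx hy hsub)
end

section
/- Let f ∈ C¹(a,b) and a < x₀ < x₁ < ... < x_{2n-1} < b. Then there exist points a < y₁ < y₂ < ... < yₙ < b such that [x₀, x₁, ..., x_{2n-1}]_f = [y₁, y₁, y₂, y₂, ..., yₙ, yₙ]_f, where repeated arguments in the divided difference are interpreted via the continuous extension (e.g. [y, y]_f = f'(y)). -/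
open Finset

/-- The divided difference `[y₁, y₁, y₂, y₂, …, yₘ, yₘ]_f` (each node doubled), given by the
confluent (Hermite) formula: the sum of residues of `f(z)/∏ᵢ(z - yᵢ)²` at the double poles,
which only requires `f` to be differentiable at the nodes. -/
noncomputable def divDiffDoubled (f : ℝ → ℝ) {m : ℕ} (y : Fin m → ℝ) : ℝ :=
  ∑ i, deriv (fun t => f t / ∏ j ∈ Finset.univ.erase i, (t - y j) ^ 2) (y i)

/-!
Let `p` interpolate `f` at the `2n` nodes `x`. Then `[x]_f` is the coefficient `c` of
`X^(2n-1)` in `p`, and `g = f - p` vanishes at every `xₖ`. By Hermite interpolation the doubled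
divided difference also returns that coefficient on polynomials of degree `< 2n`, so
`[y,y]_f = c + [y,y]_g`, and at nodes where `g` vanishes
`[y,y]_g = ∑ g'(yᵢ) / ∏_{j≠i} (yᵢ - yⱼ)²`. On each gap `[x_{2i}, x_{2i+1}]` the function `g`
has a zero with `g' ≤ 0` and one with `g' ≥ 0`; these give increasing node vectors `u`, `v`
with `[u,u]_f ≤ c ≤ [v,v]_f`. Increasing node vectors in `(a,b)` form a convex set on which
`y ↦ [y,y]_f` is continuous because `f` is `C¹`, and the intermediate value theorem
produces the nodes `y`.
-/
open Polynomial Lagrange Set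

theorem divDiff_eq_coeff_interpolate {m : ℕ} (f : ℝ → ℝ) {x : Fin m → ℝ}
    (hx : Function.Injective x) :
    divDiff f x = (interpolate univ x fun i => f (x i)).coeff (m - 1) := by
  have hinj : InjOn x (univ : Finset (Fin m)) := hx.injOn
  have h := coeff_eq_sum hinj (degree_interpolate_lt (fun i => f (x i)) hinj)
  rw [card_univ, Fintype.card_fin] at h
  simp only [h, eval_interpolate_at_node _ hinj (mem_univ _), divDiff]

section DoubledNodes

variable {m : ℕ} {y : Fin m → ℝ}

theorem prod_sq_sub_eq_eval_nodal_sq (y : Fin m → ℝ) (i : Fin m) (t : ℝ) :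
    ∏ j ∈ univ.erase i, (t - y j) ^ 2 = (nodal (univ.erase i) y).eval t ^ 2 := by
  rw [eval_nodal, Finset.prod_pow]

theorem eval_nodal_erase_ne_zero (hy : Function.Injective y) (i : Fin m) :
    (nodal (univ.erase i) y).eval (y i) ≠ 0 :=
  eval_nodal_not_at_node fun _ hj h => (mem_erase.1 hj).1 (hy h).symm

theorem divDiffDoubled_eq_sum {f : ℝ → ℝ} (hy : Function.Injective y)
    (hf : ∀ i, DifferentiableAt ℝ f (y i)) :
    divDiffDoubled f y = ∑ i, (deriv f (y i) * (nodal (univ.erase i) y).eval (y i)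
      - 2 * f (y i) * (nodal (univ.erase i) y).derivative.eval (y i)) /
        (nodal (univ.erase i) y).eval (y i) ^ 3 := by
  refine sum_congr rfl fun i _ => ?_
  set N := nodal (univ.erase i) y
  have hN : N.eval (y i) ≠ 0 := eval_nodal_erase_ne_zero hy i
  simp_rw [prod_sq_sub_eq_eval_nodal_sq]
  have hN2 := (N.hasDerivAt (y i)).pow 2
  simp only [Pi.pow_def] at hN2
  rw [((hf i).hasDerivAt.fun_div hN2 (pow_ne_zero 2 hN)).deriv]
  field_simp
  ring

theorem divDiffDoubled_neg (g : ℝ → ℝ) (y : Fin m → ℝ) :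
    divDiffDoubled (fun t => -g t) y = -divDiffDoubled g y := by
  simp_rw [divDiffDoubled, neg_div, deriv.fun_neg, sum_neg_distrib]

theorem divDiffDoubled_sub {f g : ℝ → ℝ} (hy : Function.Injective y)
    (hf : ∀ i, DifferentiableAt ℝ f (y i)) (hg : ∀ i, DifferentiableAt ℝ g (y i)) :
    divDiffDoubled (fun t => f t - g t) y = divDiffDoubled f y - divDiffDoubled g y := by
  rw [divDiffDoubled_eq_sum hy fun i => (hf i).fun_sub (hg i), divDiffDoubled_eq_sum hy hf,
    divDiffDoubled_eq_sum hy hg, ← sum_sub_distrib]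
  refine sum_congr rfl fun i _ => ?_
  rw [deriv_fun_sub (hf i) (hg i)]
  ring

theorem divDiffDoubled_eq_sum_of_eq_zero {g : ℝ → ℝ} (hy : Function.Injective y)
    (hg : ∀ i, DifferentiableAt ℝ g (y i)) (hg0 : ∀ i, g (y i) = 0) :
    divDiffDoubled g y = ∑ i, deriv g (y i) / (nodal (univ.erase i) y).eval (y i) ^ 2 := by
  rw [divDiffDoubled_eq_sum hy hg]
  refine sum_congr rfl fun i _ => ?_
  have hN := eval_nodal_erase_ne_zero hy i
  rw [hg0, mul_zero, zero_mul, sub_zero]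
  field_simp

theorem divDiffDoubled_nonneg {g : ℝ → ℝ} (hy : Function.Injective y)
    (hg : ∀ i, DifferentiableAt ℝ g (y i)) (hg0 : ∀ i, g (y i) = 0)
    (hg' : ∀ i, 0 ≤ deriv g (y i)) : 0 ≤ divDiffDoubled g y := by
  rw [divDiffDoubled_eq_sum_of_eq_zero hy hg hg0]
  exact sum_nonneg fun i _ => div_nonneg (hg' i) (sq_nonneg _)

theorem continuousOn_divDiffDoubled {f : ℝ → ℝ} {s : Set ℝ} (hs : IsOpen s)
    (hf : ContDiffOn ℝ 1 f s) :
    ContinuousOn (divDiffDoubled f)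
      {y : Fin m → ℝ | Function.Injective y ∧ ∀ i, y i ∈ s} := by
  have hfd : ∀ t ∈ s, DifferentiableAt ℝ f t := fun t ht =>
    (hf.differentiableOn one_ne_zero t ht).differentiableAt (hs.mem_nhds ht)
  refine ContinuousOn.congr ?_ fun y hy => divDiffDoubled_eq_sum hy.1 fun i => hfd _ (hy.2 i)
  refine continuousOn_finsetSum _ fun i _ => ?_
  have hcomp : ∀ {φ : ℝ → ℝ}, ContinuousOn φ s → ContinuousOn (fun y : Fin m → ℝ => φ (y i))
      {y | Function.Injective y ∧ ∀ i, y i ∈ s} :=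
    fun hφ => hφ.comp (continuous_apply i).continuousOn fun y hy => hy.2 i
  have hN : Continuous fun y : Fin m → ℝ => (nodal (univ.erase i) y).eval (y i) := by
    simp only [eval_nodal]; fun_prop
  have hN' :
      Continuous fun y : Fin m → ℝ => (nodal (univ.erase i) y).derivative.eval (y i) := by
    simp only [derivative_nodal, eval_finsetSum, eval_nodal]; fun_prop
  refine ContinuousOn.div ?_ (hN.pow 3).continuousOn
    fun y hy => pow_ne_zero 3 (eval_nodal_erase_ne_zero hy.1 i)
  exact ((hcomp (hf.continuousOn_deriv_of_isOpen hs le_rfl)).mul hN.continuousOn).sub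
    ((continuousOn_const.mul (hcomp hf.continuousOn)).mul hN'.continuousOn)

theorem sq_X_sub_C_dvd_of_isRoot {R : Type*} [CommRing R] {p : R[X]} {a : R} (h : p.IsRoot a)
    (h' : p.derivative.IsRoot a) : (X - C a) ^ 2 ∣ p := by
  rcases eq_or_ne p 0 with rfl | hp
  · exact dvd_zero _
  · exact (le_rootMultiplicity_iff hp).1 ((one_lt_rootMultiplicity_iff_isRoot hp).2 ⟨h, h'⟩)

noncomputable def tangentLine (φ : ℝ → ℝ) (y : ℝ) : ℝ[X] :=
  C (deriv φ y) * (X - C y) + C (φ y)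

theorem natDegree_tangentLine_mul_le (φ : ℝ → ℝ) (y : ℝ) (Q : ℝ[X]) :
    (tangentLine φ y * Q).natDegree ≤ Q.natDegree + 1 := by
  refine natDegree_mul_le.trans ?_
  rw [add_comm]
  gcongr
  unfold tangentLine
  compute_degree

@[simp]
theorem eval_tangentLine_self (φ : ℝ → ℝ) (y : ℝ) : (tangentLine φ y).eval y = φ y := by
  simp [tangentLine]

@[simp]
theorem derivative_tangentLine (φ : ℝ → ℝ) (y : ℝ) :
    (tangentLine φ y).derivative = C (deriv φ y) := by
  simp [tangentLine]

theorem sq_X_sub_C_dvd_sub_tangentLine_mul {q Q : ℝ[X]} {y : ℝ} (hQ : Q.eval y ≠ 0) :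
    (X - C y) ^ 2 ∣ q - tangentLine (fun t => q.eval t / Q.eval t) y * Q := by
  have hderiv := ((q.hasDerivAt y).fun_div (Q.hasDerivAt y) hQ).deriv
  apply sq_X_sub_C_dvd_of_isRoot
  · simp [hQ]
  · simp only [IsRoot, derivative_sub, derivative_mul, derivative_tangentLine, eval_sub, eval_add,
      eval_mul, eval_C, eval_tangentLine_self, hderiv]
    field_simp
    ring

theorem coeff_tangentLine_mul {Q : ℝ[X]} (hQ : Q.Monic) (φ : ℝ → ℝ) (y : ℝ) :
    (tangentLine φ y * Q).coeff (Q.natDegree + 1) = deriv φ y := by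
  have hlead : ((X - C y) * Q).coeff (Q.natDegree + 1) = 1 := by
    simpa [(monic_X_sub_C y).natDegree_mul hQ, add_comm] using
      ((monic_X_sub_C y).mul hQ).coeff_natDegree
  rw [tangentLine, add_mul, mul_assoc, coeff_add, coeff_C_mul, coeff_C_mul, hlead,
    coeff_eq_zero_of_natDegree_lt (Nat.lt_succ_self _), mul_one, mul_zero, add_zero]

theorem natDegree_nodal_erase_sq (y : Fin m → ℝ) (i : Fin m) :
    (nodal (univ.erase i) y ^ 2).natDegree = 2 * m - 2 := by
  rw [natDegree_pow, natDegree_nodal, card_erase_of_mem (mem_univ i), card_univ,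
    Fintype.card_fin]
  omega

-- Hermite interpolation: both sides agree to first order at every node, and have degree `< 2m`.
theorem eq_sum_tangentLine_mul (hy : Function.Injective y) {q : ℝ[X]}
    (hq : q.degree < ↑(2 * m)) :
    q = ∑ i, tangentLine (fun t => q.eval t / (nodal (univ.erase i) y ^ 2).eval t) (y i) *
      nodal (univ.erase i) y ^ 2 := by
  set H := ∑ i, tangentLine (fun t => q.eval t / (nodal (univ.erase i) y ^ 2).eval t) (y i) *
      nodal (univ.erase i) y ^ 2
  have hdvd : ∀ k, (X - C (y k)) ^ 2 ∣ q - H := by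
    intro k
    simp only [H]
    rw [← add_sum_erase _ _ (mem_univ k), ← sub_sub]
    refine dvd_sub (sq_X_sub_C_dvd_sub_tangentLine_mul ?_) (dvd_sum fun i hi => ?_)
    · simpa using eval_nodal_erase_ne_zero hy k
    · exact dvd_mul_of_dvd_right (pow_dvd_pow_of_dvd
        (X_sub_C_dvd_nodal y (mem_erase.2 ⟨(ne_of_mem_erase hi).symm, mem_univ k⟩)) 2) _
  have hW : nodal univ y ^ 2 ∣ q - H := by
    rw [nodal, ← Finset.prod_pow]
    exact prod_dvd_of_coprime (fun i _ j _ hij => (pairwise_coprime_X_sub_C hy hij).pow)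
      fun k _ => hdvd k
  have hH : H.degree < ↑(2 * m) := by
    refine (degree_sum_le _ _).trans_lt ((Finset.sup_lt_iff (WithBot.bot_lt_coe _)).2 fun i _ => ?_)
    have hlt := (natDegree_tangentLine_mul_le
      (fun t => q.eval t / (nodal (univ.erase i) y ^ 2).eval t) (y i) _).trans_lt
        (show (nodal (univ.erase i) y ^ 2).natDegree + 1 < 2 * m by
          rw [natDegree_nodal_erase_sq]; have := i.pos; omega)
    exact degree_le_natDegree.trans_lt (by exact_mod_cast hlt)
  refine (sub_eq_zero.1 (eq_zero_of_dvd_of_degree_lt hW ?_))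
  rw [degree_pow, degree_nodal, card_univ, Fintype.card_fin]
  exact (degree_sub_le _ _).trans_lt (max_lt (by simpa using hq) (by simpa using hH))

theorem divDiffDoubled_polynomial (hy : Function.Injective y) {q : ℝ[X]}
    (hq : q.degree < ↑(2 * m)) :
    divDiffDoubled (fun t => q.eval t) y = q.coeff (2 * m - 1) := by
  conv_rhs => rw [eq_sum_tangentLine_mul hy hq]
  rw [finsetSum_coeff]
  refine sum_congr rfl fun i _ => ?_
  have hdeg : 2 * m - 1 = (nodal (univ.erase i) y ^ 2).natDegree + 1 := by
    rw [natDegree_nodal_erase_sq]; have := i.pos; omega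
  simp_rw [hdeg, coeff_tangentLine_mul (nodal_monic.pow 2), eval_pow,
    ← prod_sq_sub_eq_eval_nodal_sq]

end DoubledNodes

theorem deriv_nonneg_of_isMinOn_Icc {g : ℝ → ℝ} {u v : ℝ} (huv : u < v)
    (hmin : IsMinOn g (Icc u v) u) (hg : DifferentiableAt ℝ g u) : 0 ≤ deriv g u := by
  have hcone : v - u ∈ posTangentConeAt (Icc u v) u :=
    sub_mem_posTangentConeAt_of_segment_subset (segment_eq_Icc huv.le).subset
  have h := hmin.localize.hasFDerivWithinAt_nonneg
    hg.hasDerivAt.hasDerivWithinAt.hasFDerivWithinAt hcone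
  simp only [ContinuousLinearMap.toSpanSingleton_apply, smul_eq_mul] at h
  exact nonneg_of_mul_nonneg_right h (sub_pos.2 huv)

theorem deriv_nonneg_of_isMaxOn_Icc {g : ℝ → ℝ} {u v : ℝ} (huv : u < v)
    (hmax : IsMaxOn g (Icc u v) v) (hg : DifferentiableAt ℝ g v) : 0 ≤ deriv g v := by
  have hcone : u - v ∈ posTangentConeAt (Icc u v) v :=
    sub_mem_posTangentConeAt_of_segment_subset
      ((segment_symm ℝ v u).trans (segment_eq_Icc huv.le)).subset
  have h := hmax.localize.hasFDerivWithinAt_nonpos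
    hg.hasDerivAt.hasDerivWithinAt.hasFDerivWithinAt hcone
  simp only [ContinuousLinearMap.toSpanSingleton_apply, smul_eq_mul] at h
  exact nonneg_of_mul_nonpos_right h (sub_neg.2 huv)

/-- The first zero of `g` after a point where `g < 0` is reached from below. -/
theorem exists_zero_deriv_nonneg_of_neg {g : ℝ → ℝ} {t v : ℝ} (htv : t ≤ v)
    (hg : ∀ s ∈ Icc t v, DifferentiableAt ℝ g s) (ht : g t < 0) (hv : g v = 0) :
    ∃ w ∈ Ioc t v, g w = 0 ∧ 0 ≤ deriv g w := by
  have hcont : ContinuousOn g (Icc t v) := fun s hs => (hg s hs).continuousAt.continuousWithinAt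
  set Z := {s ∈ Icc t v | g s = 0}
  have hZ : IsClosed Z := hcont.preimage_isClosed_of_isClosed isClosed_Icc isClosed_singleton
  have hZbdd : BddBelow Z := ⟨t, fun s hs => hs.1.1⟩
  have hwZ : sInf Z ∈ Z := hZ.csInf_mem ⟨v, right_mem_Icc.2 htv, hv⟩ hZbdd
  set w := sInf Z
  have htw : t < w := hwZ.1.1.lt_of_ne fun h => ht.ne (h ▸ hwZ.2)
  have hmax : IsMaxOn g (Icc t w) w := by
    intro s hs
    show g s ≤ g w
    rw [hwZ.2]
    by_contra! hpos
    have hsw : s < w := hs.2.lt_of_ne fun h => hpos.ne' (h ▸ hwZ.2)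
    obtain ⟨z, hz, hz0⟩ := intermediate_value_Icc hs.1 (hcont.mono (Icc_subset_Icc_right
      (hsw.le.trans hwZ.1.2))) ⟨ht.le, hpos.le⟩
    exact (csInf_le hZbdd ⟨⟨hz.1, hz.2.trans (hsw.le.trans hwZ.1.2)⟩, hz0⟩).not_gt
      (hz.2.trans_lt hsw)
  exact ⟨w, ⟨htw, hwZ.1.2⟩, hwZ.2,
    deriv_nonneg_of_isMaxOn_Icc htw hmax (hg w hwZ.1)⟩

theorem exists_zero_deriv_nonneg {g : ℝ → ℝ} {u v : ℝ} (huv : u < v)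
    (hg : ∀ s ∈ Icc u v, DifferentiableAt ℝ g s) (hu : g u = 0) (hv : g v = 0) :
    ∃ w ∈ Icc u v, g w = 0 ∧ 0 ≤ deriv g w := by
  by_cases hnonneg : ∀ s ∈ Icc u v, 0 ≤ g s
  · refine ⟨u, left_mem_Icc.2 huv.le, hu, deriv_nonneg_of_isMinOn_Icc huv ?_ (hg u ?_)⟩
    · exact fun s hs => by simpa [hu] using hnonneg s hs
    · exact left_mem_Icc.2 huv.le
  · push Not at hnonneg
    obtain ⟨t, ht, hgt⟩ := hnonneg
    obtain ⟨w, hw, hw0, hw'⟩ := exists_zero_deriv_nonneg_of_neg ht.2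
      (fun s hs => hg s ⟨ht.1.trans hs.1, hs.2⟩) hgt hv
    exact ⟨w, ⟨ht.1.trans hw.1.le, hw.2⟩, hw0, hw'⟩

theorem exists_strictMono_of_forall_Icc {n : ℕ} {x : Fin (2 * n) → ℝ} (hx : StrictMono x)
    {P : ℝ → Prop} (hP : ∀ i j, i < j → ∃ w ∈ Icc (x i) (x j), P w) :
    ∃ y : Fin n → ℝ, StrictMono y ∧ ∀ i, P (y i) := by
  choose y hy hPy using fun i : Fin n =>
    hP ⟨2 * i, by omega⟩ ⟨2 * i + 1, by omega⟩ (Fin.mk_lt_mk.2 (by omega))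
  refine ⟨y, fun i j hij => ?_, hPy⟩
  have hgap : x ⟨2 * i + 1, by omega⟩ < x ⟨2 * j, by omega⟩ :=
    hx (Fin.mk_lt_mk.2 (by have : (i : ℕ) < j := hij; omega))
  exact (hy i).2.trans_lt (hgap.trans_le (hy j).1)

theorem exists_strictMono_divDiffDoubled_nonneg {n : ℕ} {s : Set ℝ} [s.OrdConnected]
    {g : ℝ → ℝ} (hg : ∀ t ∈ s, DifferentiableAt ℝ g t) {x : Fin (2 * n) → ℝ} (hx : StrictMono x)
    (hxs : ∀ i, x i ∈ s) (hg0 : ∀ i, g (x i) = 0) :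
    ∃ v : Fin n → ℝ, StrictMono v ∧ (∀ i, v i ∈ s) ∧ 0 ≤ divDiffDoubled g v := by
  have hIcc : ∀ i j, Icc (x i) (x j) ⊆ s := fun i j => Set.OrdConnected.out' (hxs i) (hxs j)
  obtain ⟨v, hv, hvp⟩ := exists_strictMono_of_forall_Icc hx
      (P := fun w => w ∈ s ∧ g w = 0 ∧ 0 ≤ deriv g w) fun i j hij =>
    (exists_zero_deriv_nonneg (hx hij) (fun t ht => hg t (hIcc i j ht)) (hg0 i) (hg0 j)).imp
      fun w hw => ⟨hw.1, hIcc i j hw.1, hw.2⟩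
  exact ⟨v, hv, fun i => (hvp i).1, divDiffDoubled_nonneg hv.injective
    (fun i => hg _ (hvp i).1) (fun i => (hvp i).2.1) fun i => (hvp i).2.2⟩

theorem exists_strictMono_divDiffDoubled_nonpos {n : ℕ} {s : Set ℝ} [s.OrdConnected]
    {g : ℝ → ℝ} (hg : ∀ t ∈ s, DifferentiableAt ℝ g t) {x : Fin (2 * n) → ℝ} (hx : StrictMono x)
    (hxs : ∀ i, x i ∈ s) (hg0 : ∀ i, g (x i) = 0) :
    ∃ u : Fin n → ℝ, StrictMono u ∧ (∀ i, u i ∈ s) ∧ divDiffDoubled g u ≤ 0 := by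
  obtain ⟨u, hu, hus, hgu⟩ := exists_strictMono_divDiffDoubled_nonneg (g := fun t => -g t)
    (fun t ht => (hg t ht).neg) hx hxs fun i => by simp [hg0 i]
  exact ⟨u, hu, hus, by simpa [divDiffDoubled_neg] using hgu⟩

theorem convex_setOf_strictMono_mem {m : ℕ} {s : Set ℝ} (hs : Convex ℝ s) :
    Convex ℝ {y : Fin m → ℝ | StrictMono y ∧ ∀ i, y i ∈ s} := by
  rintro u ⟨hu, hus⟩ v ⟨hv, hvs⟩ a b ha hb hab
  refine ⟨fun i j hij => ?_, fun i => hs (hus i) (hvs i) ha hb hab⟩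
  simp only [Pi.add_apply, Pi.smul_apply, smul_eq_mul]
  rcases ha.eq_or_lt with rfl | ha
  · rw [zero_add] at hab
    simpa [hab] using hv hij
  · nlinarith [mul_lt_mul_of_pos_left (hu hij) ha, mul_le_mul_of_nonneg_left (hv hij).le hb]

theorem divDiff_eq_doubled_nodes_general {n : ℕ} (a b : ℝ) (f : ℝ → ℝ)
    (hf : ContDiffOn ℝ 1 f (Set.Ioo a b))
    (x : Fin (2 * n) → ℝ) (hx : StrictMono x) (hmem : ∀ i, x i ∈ Set.Ioo a b) :
    ∃ y : Fin n → ℝ, StrictMono y ∧ (∀ i, y i ∈ Set.Ioo a b) ∧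
      divDiff f x = divDiffDoubled f y := by
  set p := interpolate univ x fun i => f (x i) with hp
  set g := fun t => f t - p.eval t
  have hpdeg : p.degree < ↑(2 * n) :=
    (degree_interpolate_lt _ hx.injective.injOn).trans_eq (by rw [card_univ, Fintype.card_fin])
  have hfd : ∀ t ∈ Ioo a b, DifferentiableAt ℝ f t := fun t ht =>
    (hf.differentiableOn one_ne_zero t ht).differentiableAt (isOpen_Ioo.mem_nhds ht)
  have hgd : ∀ t ∈ Ioo a b, DifferentiableAt ℝ g t := fun t ht =>
    (hfd t ht).fun_sub p.differentiableAt
  have hg0 : ∀ i, g (x i) = 0 := fun i => by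
    simp only [g, hp, eval_interpolate_at_node _ hx.injective.injOn (mem_univ i), sub_self]
  have hsplit : ∀ y : Fin n → ℝ, StrictMono y → (∀ i, y i ∈ Ioo a b) →
      divDiffDoubled f y = divDiff f x + divDiffDoubled g y := fun y hy hys => by
    rw [divDiffDoubled_sub hy.injective (fun i => hfd _ (hys i)) fun i => p.differentiableAt,
      divDiffDoubled_polynomial hy.injective hpdeg, divDiff_eq_coeff_interpolate f hx.injective]
    ring
  obtain ⟨u, hu, hus, hgu⟩ := exists_strictMono_divDiffDoubled_nonpos hgd hx hmem hg0
  obtain ⟨v, hv, hvs, hgv⟩ := exists_strictMono_divDiffDoubled_nonneg hgd hx hmem hg0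
  obtain ⟨y, ⟨hy, hys⟩, hyc⟩ :=
    (convex_setOf_strictMono_mem (convex_Ioo a b)).isPreconnected.intermediate_value
      ⟨hu, hus⟩ ⟨hv, hvs⟩
      ((continuousOn_divDiffDoubled isOpen_Ioo hf).mono fun y hy => ⟨hy.1.injective, hy.2⟩)
      (show divDiff f x ∈ Set.Icc _ _ from
        ⟨by linarith [hsplit u hu hus], by linarith [hsplit v hv hvs]⟩)
  exact ⟨y, hy, hys, hyc.symm⟩

theorem divDiff_eq_doubled_nodes {n : ℕ} (hn : 0 < n) (a b : ℝ) (f : ℝ → ℝ)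
    (hf : ContDiffOn ℝ 1 f (Set.Ioo a b))
    (x : Fin (2 * n) → ℝ) (hx : StrictMono x) (hmem : ∀ i, x i ∈ Set.Ioo a b) :
    ∃ y : Fin n → ℝ, StrictMono y ∧ (∀ i, y i ∈ Set.Ioo a b) ∧
      divDiff f x = divDiffDoubled f y :=
  divDiff_eq_doubled_nodes_general a b f hf x hx hmem
end

section
/- Let F ⊂ ℝ be unbounded both from below and from above, and let f : F → ℝ be 2-monotone (i.e. for all 2×2 Hermitian matrices A ≤ B with spectra in F, f(A) ≤ f(B)). Then f is affine: there exist constants α, β ∈ ℝ with f(x) = αx + β for all x ∈ F. -/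
/-!
Scalar matrices show that `f` is monotone on `F`. For `a < b < c < d` in `F` put
`A = diag(a, c)` and `B = A + v vᵀ` with `v = (u, w)`, `u² = (b - a)(d - a)/(c - a)` and
`w² = (c - b)(d - c)/(c - a)`, so that `B` has spectrum `{b, d}`. Then `f(A)` and `f(B)` are the
affine interpolants of `f` on `{a, c}` and `{b, d}` applied to `A` and `B`, and
`det (f(B) - f(A)) ≥ 0` is, up to a positive factor, `[a, d] [b, c] ≤ [a, b] [c, d]` for the
slopes `[s, t]` of `f`. For `x < y < z` in `F`, letting `d → +∞` or `a → -∞` in this inequality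
between nonnegative slopes gives `[y, z] ≤ [x, y]` and `[x, y] ≤ [y, z]`, so `f` has a single
slope on `F`.
-/

open Matrix
open scoped ComplexOrder

theorem cfc_eq_smul_add_algebraMap_of_eqOn {A : Type*} {p : A → Prop} [Ring A] [StarRing A]
    [TopologicalSpace A] [Algebra ℝ A] [ContinuousFunctionalCalculus ℝ A p] {a : A} (ha : p a)
    {f : ℝ → ℝ} {α β : ℝ} (h : (spectrum ℝ a).EqOn f fun t ↦ α * t + β) :
    cfc f a = α • a + algebraMap ℝ A β := by
  rw [cfc_congr h, cfc_add .., cfc_const_mul .., cfc_id' .., cfc_const ..]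

namespace Matrix.IsHermitian

theorem cfc_eq_smul_add_algebraMap {n : Type*} [Fintype n] [DecidableEq n]
    {A : Matrix n n ℂ} (hA : A.IsHermitian) {f : ℝ → ℝ} {α β : ℝ}
    (h : ∀ i, f (hA.eigenvalues i) = α * hA.eigenvalues i + β) :
    hA.cfc f = α • A + algebraMap ℝ _ β := by
  rw [← hA.cfc_eq]
  refine cfc_eq_smul_add_algebraMap_of_eqOn hA ?_
  rw [hA.spectrum_real_eq_range_eigenvalues]
  rintro _ ⟨i, rfl⟩
  exact h i

theorem eigenvalues_eq_or_eq_of_trace_of_det {A : Matrix (Fin 2) (Fin 2) ℂ}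
    (hA : A.IsHermitian) {x y : ℝ} (htr : A.trace = ↑(x + y)) (hdet : A.det = ↑(x * y)) :
    ∀ i, hA.eigenvalues i = x ∨ hA.eigenvalues i = y := by
  have hsum : hA.eigenvalues 0 + hA.eigenvalues 1 = x + y := by
    have := hA.trace_eq_sum_eigenvalues
    rw [Fin.sum_univ_two, htr] at this
    simpa [← Complex.ofReal_inj] using this.symm
  have hprod : hA.eigenvalues 0 * hA.eigenvalues 1 = x * y := by
    have := hA.det_eq_prod_eigenvalues
    rw [Fin.prod_univ_two, hdet] at this
    simpa [← Complex.ofReal_inj] using this.symm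
  have hroot (t : ℝ) (h : (t - x) * (t - y) = 0) : t = x ∨ t = y :=
    (mul_eq_zero.mp h).imp sub_eq_zero.mp sub_eq_zero.mp
  refine Fin.forall_fin_two.2 ⟨hroot _ ?_, hroot _ ?_⟩
  · linear_combination hA.eigenvalues 0 * hsum - hprod
  · linear_combination hA.eigenvalues 1 * hsum - hprod

end Matrix.IsHermitian

def symmOfReal (p r q : ℝ) : Matrix (Fin 2) (Fin 2) ℂ := !![(p : ℂ), r; r, q]

theorem isHermitian_symmOfReal (p r q : ℝ) : (symmOfReal p r q).IsHermitian := by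
  ext i j; fin_cases i <;> fin_cases j <;> simp [symmOfReal]

theorem trace_symmOfReal (p r q : ℝ) : (symmOfReal p r q).trace = ↑(p + q) := by
  simp [symmOfReal, trace_fin_two]

theorem det_symmOfReal (p r q : ℝ) : (symmOfReal p r q).det = ↑(p * q - r ^ 2) := by
  simp [symmOfReal, det_fin_two]; ring

theorem symmOfReal_sub_symmOfReal (p r q p' r' q' : ℝ) :
    symmOfReal p r q - symmOfReal p' r' q' = symmOfReal (p - p') (r - r') (q - q') := by
  ext i j; fin_cases i <;> fin_cases j <;> simp [symmOfReal]

theorem smul_symmOfReal_add_algebraMap (α β p r q : ℝ) :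
    α • symmOfReal p r q + algebraMap ℝ _ β = symmOfReal (α * p + β) (α * r) (α * q + β) := by
  ext i j; fin_cases i <;> fin_cases j <;> simp [symmOfReal, algebraMap_eq_diagonal, Algebra.smul_def]

theorem posSemidef_symmOfReal_mul_self (u w : ℝ) :
    (symmOfReal (u * u) (u * w) (w * w)).PosSemidef := by
  convert posSemidef_conjTranspose_mul_self !![(u : ℂ), w] using 1
  ext i j; fin_cases i <;> fin_cases j <;> simp [symmOfReal, mul_apply, mul_comm]

theorem Matrix.PosSemidef.sq_le_mul_of_symmOfReal {p r q : ℝ}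
    (h : (symmOfReal p r q).PosSemidef) : r ^ 2 ≤ p * q := by
  have := h.det_nonneg
  rw [det_symmOfReal, Complex.zero_le_real] at this
  linarith

theorem sub_mul_slope (f : ℝ → ℝ) (a b : ℝ) : (b - a) * slope f a b = f b - f a :=
  sub_smul_slope f a b

theorem eq_slope_mul_add_of_eq_or_eq (f : ℝ → ℝ) {a c t : ℝ} (ht : t = a ∨ t = c) :
    f t = slope f a c * t + (f a - slope f a c * a) := by
  rcases ht with rfl | rfl
  · ring
  · linarith [sub_mul_slope f a t]

theorem slope_eq_of_slope_eq_slope {f : ℝ → ℝ} {a b c : ℝ} (hac : a ≠ c)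
    (h : slope f a b = slope f b c) : slope f a c = slope f a b := by
  rw [← lineMap_slope_slope_sub_div_sub f a b c hac, ← h, AffineMap.lineMap_same_apply]

def MatrixMonotoneOn (n : ℕ) (F : Set ℝ) (f : ℝ → ℝ) : Prop :=
  ∀ (A B : Matrix (Fin n) (Fin n) ℂ) (hA : A.IsHermitian) (hB : B.IsHermitian),
    (∀ i, hA.eigenvalues i ∈ F) → (∀ i, hB.eigenvalues i ∈ F) →
    (B - A).PosSemidef → (hB.cfc f - hA.cfc f).PosSemidef

namespace MatrixMonotoneOn

variable {F : Set ℝ} {f : ℝ → ℝ}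

theorem monotoneOn {n : ℕ} [NeZero n] (hf : MatrixMonotoneOn n F f) : MonotoneOn f F := by
  intro x hx y hy hxy
  have hscalar (t : ℝ) : (algebraMap ℝ (Matrix (Fin n) (Fin n) ℂ) t).IsHermitian :=
    (IsSelfAdjoint.all t).algebraMap _
  have heig (t : ℝ) (i) : (hscalar t).eigenvalues i = t := by
    simpa [spectrum.scalar_eq] using (hscalar t).eigenvalues_mem_spectrum_real i
  have hpsd := hf _ _ (hscalar x) (hscalar y) (fun i ↦ (heig x i).symm ▸ hx)
    (fun i ↦ (heig y i).symm ▸ hy) ?_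
  · rw [← (hscalar x).cfc_eq, ← (hscalar y).cfc_eq, cfc_algebraMap, cfc_algebraMap,
      ← map_sub] at hpsd
    simpa [algebraMap_eq_diagonal] using hpsd.diag_nonneg (i := 0)
  · rw [← map_sub, algebraMap_eq_diagonal]
    exact PosSemidef.diagonal fun _ ↦ by simpa using hxy

theorem slope_mul_slope_le (hf : MatrixMonotoneOn 2 F f) {a b c d : ℝ}
    (ha : a ∈ F) (hb : b ∈ F) (hc : c ∈ F) (hd : d ∈ F) (hab : a < b) (hbc : b < c) (hcd : c < d) :
    slope f a d * slope f b c ≤ slope f a b * slope f c d := by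
  have hca : 0 < c - a := by linarith
  obtain ⟨u, w, hu, hw⟩ : ∃ u w : ℝ,
      u * u = (b - a) * (d - a) / (c - a) ∧ w * w = (c - b) * (d - c) / (c - a) :=
    ⟨_, _, Real.mul_self_sqrt (div_nonneg (mul_nonneg (by linarith) (by linarith)) hca.le),
      Real.mul_self_sqrt (div_nonneg (mul_nonneg (by linarith) (by linarith)) hca.le)⟩
  have hA := isHermitian_symmOfReal a 0 c
  have hB := isHermitian_symmOfReal (a + u * u) (u * w) (c + w * w)
  have eigA : ∀ i, hA.eigenvalues i = a ∨ hA.eigenvalues i = c :=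
    hA.eigenvalues_eq_or_eq_of_trace_of_det (trace_symmOfReal ..) (by rw [det_symmOfReal]; ring_nf)
  have eigB : ∀ i, hB.eigenvalues i = b ∨ hB.eigenvalues i = d :=
    hB.eigenvalues_eq_or_eq_of_trace_of_det
      (by rw [trace_symmOfReal, hu, hw]; congr 1; field_simp; ring)
      (by rw [det_symmOfReal, mul_pow, sq u, sq w, hu, hw]; congr 1; field_simp; ring)
  have hmemA (i) : hA.eigenvalues i ∈ F := by rcases eigA i with h | h <;> rw [h] <;> assumption
  have hmemB (i) : hB.eigenvalues i ∈ F := by rcases eigB i with h | h <;> rw [h] <;> assumption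
  have hBA : (symmOfReal (a + u * u) (u * w) (c + w * w) - symmOfReal a 0 c).PosSemidef := by
    rw [symmOfReal_sub_symmOfReal]
    convert posSemidef_symmOfReal_mul_self u w using 2 <;> ring
  have hfA := hA.cfc_eq_smul_add_algebraMap fun i ↦
    eq_slope_mul_add_of_eq_or_eq f (eigA i)
  have hfB := hB.cfc_eq_smul_add_algebraMap fun i ↦
    eq_slope_mul_add_of_eq_or_eq f (eigB i)
  have hpsd := hf _ _ hA hB hmemA hmemB hBA
  rw [hfA, hfB, smul_symmOfReal_add_algebraMap, smul_symmOfReal_add_algebraMap,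
    symmOfReal_sub_symmOfReal] at hpsd
  have hdet := hpsd.sq_le_mul_of_symmOfReal
  rw [mul_zero, sub_zero, mul_pow, mul_pow, sq u, sq w, hu, hw] at hdet
  have hK : 0 < (b - a) * (c - b) * (d - c) * (d - a) / ((c - a) * (d - b)) := by
    apply div_pos <;> apply_rules [mul_pos] <;> linarith
  have hdet' : 0 ≤ (b - a) * (c - b) * (d - c) * (d - a) / ((c - a) * (d - b)) *
      (slope f a b * slope f c d - slope f a d * slope f b c) := by
    convert sub_nonneg.2 hdet using 1
    simp only [slope_def_field]
    field_simp [(sub_pos.2 hab).ne', (sub_pos.2 hbc).ne', (sub_pos.2 hcd).ne',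
      (sub_pos.2 (hab.trans (hbc.trans hcd))).ne', (sub_pos.2 (hbc.trans hcd)).ne']
    ring
  exact sub_nonneg.1 ((mul_nonneg_iff_of_pos_left hK).1 hdet')

end MatrixMonotoneOn

section slopes

variable {F : Set ℝ} {f : ℝ → ℝ} {x y z : ℝ}

theorem slope_le_slope_of_not_bddAbove (hF : ¬BddAbove F) (hf : MonotoneOn f F)
    (hx : x ∈ F) (hy : y ∈ F) (hz : z ∈ F) (hxy : x < y) (hyz : y < z)
    (h : ∀ M ∈ F, z < M → slope f x M * slope f y z ≤ slope f x y * slope f z M) :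
    slope f y z ≤ slope f x y := by
  by_contra! hlt
  have hp : 0 ≤ slope f x y := hf.slope_nonneg hx hy
  obtain ⟨M, hM, hMlt⟩ := not_bddAbove_iff.1 hF
    (max z ((z * slope f y z - x * slope f x y) / (slope f y z - slope f x y)))
  have hzM : z < M := (le_max_left _ _).trans_lt hMlt
  have hlarge : z * slope f y z - x * slope f x y < M * (slope f y z - slope f x y) :=
    (div_lt_iff₀ (sub_pos.2 hlt)).1 ((le_max_right _ _).trans_lt hMlt)
  have hr : 0 ≤ slope f z M := hf.slope_nonneg hz hM
  have key : ((y - x) * slope f x y + (z - y) * slope f y z + (M - z) * slope f z M) * slope f y z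
      ≤ (M - x) * (slope f x y * slope f z M) := calc
    _ = (M - x) * (slope f x M * slope f y z) := by
      linear_combination (sub_mul_slope f x y + sub_mul_slope f y z + sub_mul_slope f z M
        - sub_mul_slope f x M) * slope f y z
    _ ≤ _ := mul_le_mul_of_nonneg_left (h M hM hzM) (by linarith)
  nlinarith [mul_nonneg (mul_nonneg (sub_pos.2 hxy).le hp) (hp.trans hlt.le),
    mul_nonneg hr (sub_pos.2 hlarge).le,
    mul_pos (sub_pos.2 hyz) (mul_pos (hp.trans_lt hlt) (hp.trans_lt hlt))]

theorem slope_le_slope_of_not_bddBelow (hF : ¬BddBelow F) (hf : MonotoneOn f F)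
    (hx : x ∈ F) (hy : y ∈ F) (hz : z ∈ F) (hxy : x < y) (hyz : y < z)
    (h : ∀ m ∈ F, m < x → slope f m z * slope f x y ≤ slope f m x * slope f y z) :
    slope f x y ≤ slope f y z := by
  by_contra! hlt
  have hr : 0 ≤ slope f y z := hf.slope_nonneg hy hz
  obtain ⟨m, hm, hmlt⟩ := not_bddBelow_iff.1 hF
    (min x ((x * slope f x y - z * slope f y z) / (slope f x y - slope f y z)))
  have hmx : m < x := hmlt.trans_le (min_le_left _ _)
  have hsmall : m * (slope f x y - slope f y z) < x * slope f x y - z * slope f y z :=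
    (lt_div_iff₀ (sub_pos.2 hlt)).1 (hmlt.trans_le (min_le_right _ _))
  have hp : 0 ≤ slope f m x := hf.slope_nonneg hm hx
  have key : ((x - m) * slope f m x + (y - x) * slope f x y + (z - y) * slope f y z) * slope f x y
      ≤ (z - m) * (slope f m x * slope f y z) := calc
    _ = (z - m) * (slope f m z * slope f x y) := by
      linear_combination (sub_mul_slope f m x + sub_mul_slope f x y + sub_mul_slope f y z
        - sub_mul_slope f m z) * slope f x y
    _ ≤ _ := mul_le_mul_of_nonneg_left (h m hm hmx) (by linarith)
  nlinarith [mul_nonneg (mul_nonneg (sub_pos.2 hyz).le hr) (hr.trans hlt.le),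
    mul_nonneg hp (sub_pos.2 hsmall).le,
    mul_pos (sub_pos.2 hxy) (mul_pos (hr.trans_lt hlt) (hr.trans_lt hlt))]

theorem exists_affine_of_slope_eq_slope {x₀ y₀ : ℝ} (hx₀ : x₀ ∈ F) (hy₀ : y₀ ∈ F) (hlt : x₀ < y₀)
    (h : ∀ ⦃x y z⦄, x ∈ F → y ∈ F → z ∈ F → x < y → y < z → slope f x y = slope f y z) :
    ∃ α β : ℝ, ∀ x ∈ F, f x = α * x + β := by
  refine ⟨slope f x₀ y₀, f x₀ - slope f x₀ y₀ * x₀, fun x hx ↦ ?_⟩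
  suffices hs : x = x₀ ∨ slope f x₀ x = slope f x₀ y₀ by
    rcases hs with rfl | hs
    · ring
    · linarith [hs ▸ sub_mul_slope f x₀ x]
  rcases lt_trichotomy x x₀ with hxx₀ | rfl | hx₀x
  · exact .inr (slope_comm f x₀ x ▸ h hx hx₀ hy₀ hxx₀ hlt)
  · exact .inl rfl
  rcases lt_trichotomy x y₀ with hxy₀ | rfl | hy₀x
  · exact .inr (slope_eq_of_slope_eq_slope hlt.ne (h hx₀ hx hy₀ hx₀x hxy₀)).symm
  · exact .inr rfl
  · exact .inr (slope_eq_of_slope_eq_slope (hlt.trans hy₀x).ne (h hx₀ hy₀ hx hlt hy₀x))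

end slopes

theorem two_monotone_on_unbounded_set_is_affine (F : Set ℝ)
    (hbelow : ¬ BddBelow F) (habove : ¬ BddAbove F) (f : ℝ → ℝ)
    (hmono : ∀ (A B : Matrix (Fin 2) (Fin 2) ℂ) (hA : A.IsHermitian) (hB : B.IsHermitian),
      (∀ i, hA.eigenvalues i ∈ F) → (∀ i, hB.eigenvalues i ∈ F) →
      (B - A).PosSemidef → (hB.cfc f - hA.cfc f).PosSemidef) :
    ∃ α β : ℝ, ∀ x ∈ F, f x = α * x + β := by
  have hf : MatrixMonotoneOn 2 F f := hmono
  obtain ⟨x₀, hx₀, -⟩ := not_bddAbove_iff.1 habove 0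
  obtain ⟨y₀, hy₀, hlt⟩ := not_bddAbove_iff.1 habove x₀
  refine exists_affine_of_slope_eq_slope hx₀ hy₀ hlt fun x y z hx hy hz hxy hyz ↦ le_antisymm ?_ ?_
  · exact slope_le_slope_of_not_bddBelow hbelow hf.monotoneOn hx hy hz hxy hyz
      fun m hm hmx ↦ hf.slope_mul_slope_le hm hx hy hz hmx hxy hyz
  · exact slope_le_slope_of_not_bddAbove habove hf.monotoneOn hx hy hz hxy hyz
      fun M hM hzM ↦ hf.slope_mul_slope_le hx hy hz hM hxy hyz hzM
end
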